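/- arXiv:2212.13794 — 4 statements merged into one kernel-verified Lean document; each statement's English description precedes it below -/
import Mathlib

section
/- For every integer k ≥ 1, the set of all binary words (of arbitrary length, including the empty word) that avoid 0^i 1^{k−i} for every i ∈ {0,1,…,k} is finite, and its cardinality is C_{k+1} − 1. Equivalently, Σ_{m=0}^{2k−2} B(k,m) = C_{k+1} − 1. -/
/-- The binary word `0^j 1^{k-j}` (here `false` plays the role of `0` and
`true` the role of `1`). -/
def pat (k j : ℕ) : List Bool := List.replicate j false ++ List.replicate (k - j) true

/-- `w` avoids (as a not necessarily contiguous subsequence) the word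
`0^j 1^{k−j}` for every `j ∈ {0,…,k}`. -/
def AvoidsAll (k : ℕ) (w : List Bool) : Prop := ∀ j ≤ k, ¬ (pat k j).Sublist w

/-- `B(k,m)`: the number of binary words of length `m` avoiding `0^j 1^{k−j}`
for every `j ∈ {0,…,k}`. -/
noncomputable def B (k m : ℕ) : ℕ := {w : List Bool | w.length = m ∧ AvoidsAll k w}.ncard

open List DyckStep

def stp (b : Bool) : DyckStep := bif b then U else D

def toB : DyckStep → Bool | U => true | D => false

lemma stp_injective : Function.Injective stp := by decide

lemma toB_injective : Function.Injective toB := by intro x y; cases x <;> cases y <;> simp [toB]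

@[simp] lemma stp_toB (x : DyckStep) : stp (toB x) = x := by cases x <;> rfl

lemma count_U_map_stp (w : List Bool) : (w.map stp).count U = w.count true :=
  List.count_map_of_injective w stp stp_injective true

lemma count_D_map_stp (w : List Bool) : (w.map stp).count D = w.count false :=
  List.count_map_of_injective w stp stp_injective false

lemma count_true_map_toB (m : List DyckStep) : (m.map toB).count true = m.count U :=
  List.count_map_of_injective m toB toB_injective U

lemma count_false_map_toB (m : List DyckStep) : (m.map toB).count false = m.count D :=
  List.count_map_of_injective m toB toB_injective D

lemma bool_length_eq (w : List Bool) : w.length = w.count true + w.count false := by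
  induction w with
  | nil => simp
  | cons h t ih => cases h <;> simp [List.count_cons] <;> omega

lemma dyck_length_eq (l : List DyckStep) : l.length = l.count U + l.count D := by
  induction l with
  | nil => simp
  | cons h t ih => cases h <;> simp [List.count_cons] <;> omega

lemma avoidsAll_iff {k : ℕ} (hk : 1 ≤ k) (w : List Bool) :
    AvoidsAll k w ↔ ∀ p, (w.take p).count false + (w.drop p).count true ≤ k - 1 := by
  constructor
  · intro h p
    by_contra hc
    push_neg at hc
    set cf := (w.take p).count false with hcf
    set ct := (w.drop p).count true with hct
    refine h (min k cf) (min_le_left _ _) ?_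
    have h1 : (List.replicate (min k cf) false).Sublist (w.take p) :=
      List.replicate_sublist_iff.mpr (min_le_right _ _)
    have h2 : (List.replicate (k - min k cf) true).Sublist (w.drop p) :=
      List.replicate_sublist_iff.mpr (by omega)
    have h3 := h1.append h2
    rw [List.take_append_drop] at h3
    exact h3
  · intro h j hj hsub
    unfold pat at hsub
    rw [List.append_sublist_iff] at hsub
    obtain ⟨r₁, r₂, hw, h1, h2⟩ := hsub
    have hc1 : j ≤ r₁.count false := List.replicate_sublist_iff.mp h1
    have hc2 : k - j ≤ r₂.count true := List.replicate_sublist_iff.mp h2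
    have h3 := h r₁.length
    rw [hw, List.take_left, List.drop_left] at h3
    omega

lemma count_true_le {k : ℕ} (hk : 1 ≤ k) {w : List Bool} (hw : AvoidsAll k w) :
    w.count true ≤ k - 1 := by
  have := (avoidsAll_iff hk w).mp hw 0
  simpa using this

lemma count_false_le {k : ℕ} (hk : 1 ≤ k) {w : List Bool} (hw : AvoidsAll k w) :
    w.count false ≤ k - 1 := by
  have := (avoidsAll_iff hk w).mp hw w.length
  simpa [List.take_of_length_le le_rfl, List.drop_eq_nil_of_le le_rfl] using this

lemma length_le {k : ℕ} (hk : 1 ≤ k) {w : List Bool} (hw : AvoidsAll k w) :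
    w.length ≤ 2 * k - 2 := by
  have h1 := count_true_le hk hw
  have h2 := count_false_le hk hw
  have h3 := bool_length_eq w
  omega

def enc (k : ℕ) (w : List Bool) : List DyckStep :=
  List.replicate (k - w.count true) U ++
    D :: (w.map stp ++ U :: List.replicate (k - w.count false) D)

lemma enc_count_U {k : ℕ} (w : List Bool) (hb : w.count true ≤ k) :
    (enc k w).count U = k + 1 := by
  simp [enc, List.count_append, List.count_cons, List.count_replicate,
    count_U_map_stp]
  omega

lemma enc_count_D {k : ℕ} (w : List Bool) (ha : w.count false ≤ k) :
    (enc k w).count D = k + 1 := by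
  simp [enc, List.count_append, List.count_cons, List.count_replicate,
    count_D_map_stp]
  omega

lemma enc_prefix {k : ℕ} (hk : 1 ≤ k) {w : List Bool} (hw : AvoidsAll k w) (i : ℕ) :
    ((enc k w).take i).count D ≤ ((enc k w).take i).count U := by
  have hb := count_true_le hk hw
  have ha := count_false_le hk hw
  set b := w.count true with hbdef
  set a := w.count false with hadef
  set s := k - b with hsdef
  set n := w.length with hndef
  rcases le_or_gt i s with hi | hi
  · -- prefix inside the initial replicate
    rw [enc, List.take_append_of_le_length (by simpa using hi), List.take_replicate]
    simp [List.count_replicate]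
  · -- i > s
    set j := i - s - 1 with hjdef
    have hi' : i = s + 1 + j := by omega
    rcases le_or_gt j n with hj | hj
    · -- middle region
      have htake : (enc k w).take i =
          List.replicate s U ++ D :: (w.map stp).take j := by
        rw [enc, List.take_append, List.length_replicate,
          List.take_of_length_le (by simp; omega)]
        congr 1
        have h1 : i - s = j + 1 := by omega
        rw [h1, List.take_succ_cons, List.take_append_of_le_length (by simpa using hj)]
      rw [htake]
      have hmap : (w.map stp).take j = (w.take j).map stp := (List.map_take (f := stp) (l := w) (i := j)).symm
      rw [hmap]
      have key := (avoidsAll_iff hk w).mp hw j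
      have hsplit : (w.take j).count true + (w.drop j).count true = b := by
        rw [hbdef, ← List.count_append, List.take_append_drop]
      simp only [List.count_append, List.count_cons, List.count_replicate,
        count_U_map_stp, count_D_map_stp]
      simp
      omega
    · -- late region: compute counts directly
      have htake : (enc k w).take i =
          List.replicate s U ++ D :: (w.map stp ++ U ::
            (List.replicate (k - a) D).take (j - n - 1)) := by
        rw [enc, List.take_append, List.length_replicate,
          List.take_of_length_le (by simp; omega)]
        congr 1
        have h1 : i - s = j + 1 := by omega
        rw [h1, List.take_succ_cons, List.take_append,
          List.take_of_length_le (by simp; omega), List.length_map]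
        have h2 : j - n = (j - n - 1) + 1 := by omega
        rw [hndef] at h2
        rw [h2, List.take_succ_cons]
        simp [hadef]
      rw [htake, List.take_replicate]
      simp only [List.count_append, List.count_cons, List.count_replicate,
        count_U_map_stp, count_D_map_stp]
      simp
      omega

def encD {k : ℕ} (hk : 1 ≤ k) {w : List Bool} (hw : AvoidsAll k w) : DyckWord where
  toList := enc k w
  count_U_eq_count_D := by
    rw [enc_count_U w (by have := count_true_le hk hw; omega),
      enc_count_D w (by have := count_false_le hk hw; omega)]
  count_D_le_count_U := enc_prefix hk hw

def stair (k : ℕ) : DyckWord where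
  toList := List.replicate (k + 1) U ++ List.replicate (k + 1) D
  count_U_eq_count_D := by simp [List.count_append, List.count_replicate]
  count_D_le_count_U i := by
    rw [List.take_append, List.take_replicate, List.take_replicate,
      List.count_append, List.count_append]
    simp [List.count_replicate]

lemma stair_semilength (k : ℕ) : (stair k).semilength = k + 1 := by
  simp [stair, DyckWord.semilength, List.count_append, List.count_replicate]

lemma encD_semilength {k : ℕ} (hk : 1 ≤ k) {w : List Bool} (hw : AvoidsAll k w) :
    (encD hk hw).semilength = k + 1 := by
  have := count_true_le hk hw
  exact enc_count_U w (by omega)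

lemma takeWhile_rep_U (s : ℕ) (rest : List DyckStep) :
    ((List.replicate s U ++ D :: rest).takeWhile (· == U)) = List.replicate s U := by
  induction s with
  | zero => simp
  | succ m ih => rw [List.replicate_succ, List.cons_append, List.takeWhile_cons]; simp [ih]

lemma takeWhile_rep_D (t : ℕ) (rest : List DyckStep) :
    ((List.replicate t D ++ U :: rest).takeWhile (· == D)) = List.replicate t D := by
  induction t with
  | zero => simp
  | succ m ih => rw [List.replicate_succ, List.cons_append, List.takeWhile_cons]; simp [ih]

lemma enc_reverse (k : ℕ) (w : List Bool) :
    (enc k w).reverse = List.replicate (k - w.count false) D ++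
      U :: ((w.map stp).reverse ++ D :: List.replicate (k - w.count true) U) := by
  simp [enc, List.reverse_append, List.reverse_replicate]

lemma enc_injective {k : ℕ} (hk : 1 ≤ k) {w₁ w₂ : List Bool}
    (h₁ : AvoidsAll k w₁) (h₂ : AvoidsAll k w₂) (he : enc k w₁ = enc k w₂) : w₁ = w₂ := by
  have hb₁ := count_true_le hk h₁
  have hb₂ := count_true_le hk h₂
  have ha₁ := count_false_le hk h₁
  have ha₂ := count_false_le hk h₂
  -- equal `s`
  have e1 : (enc k w₁).takeWhile (· == U) = List.replicate (k - w₁.count true) U := by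
    rw [enc]; exact takeWhile_rep_U _ _
  have e2 : (enc k w₂).takeWhile (· == U) = List.replicate (k - w₂.count true) U := by
    rw [enc]; exact takeWhile_rep_U _ _
  have hs : k - w₁.count true = k - w₂.count true := by
    have h3 : List.replicate (k - w₁.count true) U = List.replicate (k - w₂.count true) U := by
      rw [← e1, ← e2, he]
    simpa using congrArg List.length h3
  have hbb : w₁.count true = w₂.count true := by omega
  -- equal `t`
  have f1 : (enc k w₁).reverse.takeWhile (· == D) = List.replicate (k - w₁.count false) D := by
    rw [enc_reverse]; exact takeWhile_rep_D _ _
  have f2 : (enc k w₂).reverse.takeWhile (· == D) = List.replicate (k - w₂.count false) D := by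
    rw [enc_reverse]; exact takeWhile_rep_D _ _
  have ht : k - w₁.count false = k - w₂.count false := by
    have h3 : List.replicate (k - w₁.count false) D = List.replicate (k - w₂.count false) D := by
      rw [← f1, ← f2, he]
    simpa using congrArg List.length h3
  have haa : w₁.count false = w₂.count false := by omega
  -- cancel and compare middles
  rw [enc, enc, hbb, haa] at he
  have he2 := (List.append_inj he (by simp)).2
  have he3 : w₁.map stp ++ (U :: List.replicate (k - w₂.count false) D)
      = w₂.map stp ++ (U :: List.replicate (k - w₂.count false) D) := by
    injection he2
  have hlen : (w₁.map stp).length = (w₂.map stp).length := by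
    rw [List.length_map, List.length_map, bool_length_eq, bool_length_eq, hbb, haa]
  have := (List.append_inj he3 hlen).1
  exact List.map_injective_iff.mpr stp_injective this

lemma enc_ne_stair {k : ℕ} (hk : 1 ≤ k) {w : List Bool} (hw : AvoidsAll k w) :
    encD hk hw ≠ stair k := by
  intro h
  have hb := count_true_le hk hw
  have he : enc k w = List.replicate (k + 1) U ++ D :: List.replicate k D := by
    have : (stair k).toList = List.replicate (k + 1) U ++ D :: List.replicate k D := by
      simp [stair, List.replicate_succ]
    rw [← this, ← h]; rfl
  have := congrArg (fun l => (l.takeWhile (· == U)).length) he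
  simp only [enc, takeWhile_rep_U, List.length_replicate] at this
  omega

lemma enc_surjective {k : ℕ} (hk : 1 ≤ k) (p : DyckWord) (hsl : p.semilength = k + 1)
    (hne : p ≠ stair k) : ∃ w : List Bool, ∃ hw : AvoidsAll k w, encD hk hw = p := by
  have hU : p.toList.count U = k + 1 := hsl
  have hD : p.toList.count D = k + 1 := by rw [← p.count_U_eq_count_D]; exact hU
  have hlen : p.toList.length = 2 * k + 2 := by rw [dyck_length_eq, hU, hD]; ring
  set l := p.toList with hl
  -- front decomposition
  set s := (l.takeWhile (· == U)).length with hs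
  have htw : l.takeWhile (· == U) = List.replicate s U := by
    rw [List.eq_replicate_iff]
    exact ⟨rfl, fun b hb => by have := List.mem_takeWhile_imp hb; simpa using this⟩
  have hdwne : l.dropWhile (· == U) ≠ [] := by
    intro h0
    have h1 : l = List.replicate s U := by
      conv_lhs => rw [← List.takeWhile_append_dropWhile (p := (· == U)) (l := l)]
      rw [htw, h0, List.append_nil]
    rw [h1] at hD
    simp [List.count_replicate] at hD
  have hhead : (l.dropWhile (· == U)).head hdwne = D := by
    have h1 := List.head_dropWhile_not (· == U) hdwne
    rcases ((l.dropWhile (· == U)).head hdwne).dichotomy with h | h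
    · rw [h] at h1; simp at h1
    · exact h
  obtain ⟨rest, hrest⟩ : ∃ rest, l = List.replicate s U ++ D :: rest := by
    refine ⟨(l.dropWhile (· == U)).tail, ?_⟩
    conv_lhs => rw [← List.takeWhile_append_dropWhile (p := (· == U)) (l := l)]
    rw [htw]
    congr 1
    rw [← hhead]
    exact (List.cons_head_tail hdwne).symm
  have hcul : l.count U = s + rest.count U := by
    rw [hrest]; simp [List.count_append, List.count_replicate, List.count_cons]
  have hcdl : l.count D = 1 + rest.count D := by
    rw [hrest]; simp [List.count_append, List.count_replicate, List.count_cons]; omega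
  have hrestlen : rest.length = 2 * k + 1 - s := by
    have h1 := hlen; rw [hrest] at h1; simp at h1; omega
  have hs1 : 1 ≤ s := by
    by_contra h0
    have h1 : l = D :: rest := by
      rw [hrest, show s = 0 by omega]; simp
    have h2 := p.count_D_le_count_U 1
    rw [← hl, h1] at h2
    simp [List.count_cons] at h2
  have hsk : s ≤ k := by
    by_contra h0
    push_neg at h0
    have hs2 : s = k + 1 ∧ rest.count U = 0 := by omega
    have hrl : rest.length = k := by omega
    have hrd : rest = List.replicate k D := by
      rw [List.eq_replicate_iff]
      refine ⟨hrl, fun b hb => ?_⟩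
      rcases b.dichotomy with h | h
      · exact absurd hb (by rw [h]; exact List.count_eq_zero.mp hs2.2)
      · exact h
    refine hne (DyckWord.ext ?_)
    show p.toList = (stair k).toList
    rw [← hl, hrest, hs2.1, hrd]
    simp [stair, List.replicate_succ]
  -- back decomposition
  have hrU : l.reverse.count U = k + 1 := by rw [List.count_reverse]; exact hU
  have hrD : l.reverse.count D = k + 1 := by rw [List.count_reverse]; exact hD
  set t := (l.reverse.takeWhile (· == D)).length with ht
  have htw2 : l.reverse.takeWhile (· == D) = List.replicate t D := by
    rw [List.eq_replicate_iff]
    exact ⟨rfl, fun b hb => by have := List.mem_takeWhile_imp hb; simpa using this⟩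
  have hdwne2 : l.reverse.dropWhile (· == D) ≠ [] := by
    intro h0
    have h1 : l.reverse = List.replicate t D := by
      conv_lhs => rw [← List.takeWhile_append_dropWhile (p := (· == D)) (l := l.reverse)]
      rw [htw2, h0, List.append_nil]
    rw [h1] at hrU
    simp [List.count_replicate] at hrU
  have hhead2 : (l.reverse.dropWhile (· == D)).head hdwne2 = U := by
    have h1 := List.head_dropWhile_not (· == D) hdwne2
    rcases ((l.reverse.dropWhile (· == D)).head hdwne2).dichotomy with h | h
    · exact h
    · rw [h] at h1; simp at h1
  obtain ⟨rest2, hrest2⟩ : ∃ rest2, l.reverse = List.replicate t D ++ U :: rest2 := by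
    refine ⟨(l.reverse.dropWhile (· == D)).tail, ?_⟩
    conv_lhs => rw [← List.takeWhile_append_dropWhile (p := (· == D)) (l := l.reverse)]
    rw [htw2]
    congr 1
    rw [← hhead2]
    exact (List.cons_head_tail hdwne2).symm
  have hcul2 : l.reverse.count U = 1 + rest2.count U := by
    rw [hrest2]; simp [List.count_append, List.count_replicate, List.count_cons]; omega
  have hcdl2 : l.reverse.count D = t + rest2.count D := by
    rw [hrest2]; simp [List.count_append, List.count_replicate, List.count_cons]
  have hrest2len : rest2.length = 2 * k + 1 - t := by
    have h1 : l.reverse.length = 2 * k + 2 := by rw [List.length_reverse]; exact hlen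
    rw [hrest2] at h1; simp at h1; omega
  have ht1 : 1 ≤ t := by
    by_contra h0
    have h1 : l.reverse = U :: rest2 := by
      rw [hrest2, show t = 0 by omega]; simp
    have hlne : l ≠ [] := by intro h2; rw [h2] at hlen; simp at hlen
    have h3 : l.getLast? = some D := by
      rw [List.getLast?_eq_getLast hlne, DyckWord.getLast_eq_D p hlne]
    have h4 : l = rest2.reverse ++ [U] := by
      have h5 := congrArg List.reverse h1
      simpa using h5
    rw [h4, List.getLast?_concat] at h3
    simp at h3
  have htk : t ≤ k := by
    by_contra h0
    push_neg at h0
    have ht2 : t = k + 1 ∧ rest2.count D = 0 := by omega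
    have hrl : rest2.length = k := by omega
    have hru : rest2 = List.replicate k U := by
      rw [List.eq_replicate_iff]
      refine ⟨hrl, fun b hb => ?_⟩
      rcases b.dichotomy with h | h
      · exact h
      · exact absurd hb (by rw [h]; exact List.count_eq_zero.mp ht2.2)
    refine hne (DyckWord.ext ?_)
    show p.toList = (stair k).toList
    have h1 : l = (List.replicate t D ++ U :: rest2).reverse := by
      rw [← hrest2]; simp
    rw [← hl, h1, ht2.1, hru,
      show (U :: List.replicate k U) = List.replicate (k + 1) U from (List.replicate_succ (a := U) (n := k)).symm]
    simp [stair, List.reverse_append]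
  -- combine the two decompositions
  have hfront : l = rest2.reverse ++ U :: List.replicate t D := by
    have h1 : l = (List.replicate t D ++ U :: rest2).reverse := by
      rw [← hrest2]; simp
    rw [h1]
    simp [List.reverse_append, List.reverse_replicate]
  set mid := rest2.reverse.drop (s + 1) with hmid
  have hr2len : rest2.reverse.length = 2 * k + 1 - t := by
    rw [List.length_reverse]; exact hrest2len
  have hdrop1 : l.drop (s + 1) = rest := by
    rw [hrest, List.drop_append, List.drop_eq_nil_of_le (by simp),
      List.length_replicate, show s + 1 - s = 1 by omega, List.drop_succ_cons,
      List.drop_zero, List.nil_append]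
  have hdrop2 : l.drop (s + 1) = mid ++ U :: List.replicate t D := by
    rw [hfront, List.drop_append]
    have h1 : s + 1 - rest2.reverse.length = 0 := by omega
    rw [h1]
    simp [hmid]
  have hform : l = List.replicate s U ++ D :: (mid ++ U :: List.replicate t D) := by
    rw [hrest, ← hdrop1, hdrop2]
  -- define the word
  set w : List Bool := mid.map toB with hwdef
  have hmapstp : w.map stp = mid := by
    rw [hwdef, List.map_map, show stp ∘ toB = id from funext stp_toB, List.map_id]
  have hcmidU : mid.count U = k - s := by
    have e := hU
    rw [hform] at e
    simp [List.count_append, List.count_replicate, List.count_cons] at e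
    omega
  have hcmidD : mid.count D = k - t := by
    have e := hD
    rw [hform] at e
    simp [List.count_append, List.count_replicate, List.count_cons] at e
    omega
  have hb : w.count true = k - s := by rw [hwdef, count_true_map_toB]; exact hcmidU
  have ha : w.count false = k - t := by rw [hwdef, count_false_map_toB]; exact hcmidD
  have hbs : k - w.count true = s := by omega
  have hat : k - w.count false = t := by omega
  have hwlen : w.length = mid.length := by rw [hwdef, List.length_map]
  have hmidlen : mid.length = 2 * k - s - t := by
    have e := hlen
    rw [hform] at e
    simp at e
    omega
  -- the word avoids all patterns
  have key : ∀ q ≤ mid.length, (w.take q).count false + (w.drop q).count true ≤ k - 1 := by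
    intro q hq
    have hc := p.count_D_le_count_U (s + 1 + q)
    have htake : l.take (s + 1 + q) = List.replicate s U ++ D :: mid.take q := by
      rw [hform, List.take_append,
        List.take_of_length_le (by simp; omega), List.length_replicate,
        show s + 1 + q - s = q + 1 by omega, List.take_succ_cons,
        List.take_append_of_le_length hq]
    rw [show p.toList = l from rfl, htake] at hc
    simp only [List.count_append, List.count_cons, List.count_replicate] at hc
    simp at hc
    have e1 : (w.take q).count false = (mid.take q).count D := by
      rw [hwdef, ← List.map_take, count_false_map_toB]
    have e2 : (w.take q).count true = (mid.take q).count U := by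
      rw [hwdef, ← List.map_take, count_true_map_toB]
    have e3 : (w.take q).count true + (w.drop q).count true = k - s := by
      rw [← List.count_append, List.take_append_drop, hb]
    omega
  have hwav : AvoidsAll k w := by
    rw [avoidsAll_iff hk]
    intro q
    rcases le_or_gt q w.length with h | h
    · exact key q (by omega)
    · rw [List.take_of_length_le (by omega), List.drop_eq_nil_of_le (by omega)]
      have h2 := key mid.length le_rfl
      rw [List.take_of_length_le (by omega), List.drop_eq_nil_of_le (by omega)] at h2
      simpa using h2
  refine ⟨w, hwav, DyckWord.ext ?_⟩
  show enc k w = p.toList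
  rw [enc, hbs, hat, hmapstp, ← hform]

lemma avoid_finite {k : ℕ} (hk : 1 ≤ k) : {w : List Bool | AvoidsAll k w}.Finite :=
  (List.finite_length_le Bool (2 * k - 2)).subset (fun _ hw => length_le hk hw)

lemma main_card {k : ℕ} (hk : 1 ≤ k) :
    {w : List Bool | AvoidsAll k w}.ncard = catalan (k + 1) - 1 := by
  classical
  set S := {w : List Bool | AvoidsAll k w} with hS
  let stairq : {p : DyckWord // p.semilength = k + 1} := ⟨stair k, stair_semilength k⟩
  have hmem : ∀ w : S, AvoidsAll k w.1 := fun w => w.2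
  let f : S → {q : {p : DyckWord // p.semilength = k + 1} // q ≠ stairq} := fun w =>
    ⟨⟨encD hk (hmem w), encD_semilength hk (hmem w)⟩, by
      intro h
      exact enc_ne_stair hk (hmem w) (congrArg Subtype.val h)⟩
  have hbij : Function.Bijective f := by
    constructor
    · intro w1 w2 h
      simp only [f, Subtype.mk.injEq] at h
      apply Subtype.ext
      apply enc_injective hk (hmem w1) (hmem w2)
      exact congrArg DyckWord.toList h
    · rintro ⟨⟨p, hp⟩, hpne⟩
      obtain ⟨w, hw, hwp⟩ := enc_surjective hk p hp (fun h => hpne (Subtype.ext h))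
      refine ⟨⟨w, hw⟩, ?_⟩
      apply Subtype.ext
      apply Subtype.ext
      exact hwp
  calc S.ncard = Nat.card S := (Nat.card_coe_set_eq S).symm
    _ = Nat.card {q : {p : DyckWord // p.semilength = k + 1} // q ≠ stairq} :=
        Nat.card_congr (Equiv.ofBijective f hbij)
    _ = Fintype.card {q : {p : DyckWord // p.semilength = k + 1} // q ≠ stairq} :=
        Nat.card_eq_fintype_card
    _ = catalan (k + 1) - 1 := by
        have h1 := Fintype.card_subtype_compl
          (fun q : {p : DyckWord // p.semilength = k + 1} => q = stairq)
        rw [Fintype.card_subtype_eq, DyckWord.card_dyckWord_semilength_eq_catalan] at h1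
        convert h1 using 2


/-- For `k ≥ 1`, the set of all binary words (of arbitrary length, including the
empty word) avoiding `0^i 1^{k−i}` for every `i ∈ {0,…,k}` is finite of
cardinality `C_{k+1} − 1`; equivalently `Σ_{m=0}^{2k−2} B(k,m) = C_{k+1} − 1`. -/
theorem total_avoiding_words (k : ℕ) (hk : 1 ≤ k) :
    {w : List Bool | AvoidsAll k w}.Finite ∧
      {w : List Bool | AvoidsAll k w}.ncard = catalan (k + 1) - 1 ∧
      ∑ m ∈ Finset.range (2 * k - 1), B k m = catalan (k + 1) - 1 := by
  classical
  have hfin := avoid_finite hk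
  refine ⟨hfin, main_card hk, ?_⟩
  rw [← main_card hk]
  rw [Set.ncard_eq_toFinset_card _ hfin]
  rw [Finset.card_eq_sum_card_fiberwise
    (f := fun w : List Bool => w.length) (t := Finset.range (2 * k - 1))
    (fun w hw => by
      rw [Finset.mem_coe, Set.Finite.mem_toFinset] at hw
      simp only [Finset.mem_coe, Finset.mem_range]
      have := length_le hk hw
      omega)]
  apply Finset.sum_congr rfl
  intro m _
  show B k m = _
  unfold B
  have he : {w : List Bool | w.length = m ∧ AvoidsAll k w}
      = ↑((hfin.toFinset).filter (fun w => w.length = m)) := by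
    ext w
    simp [Set.Finite.mem_toFinset, and_comm]
  rw [he, Set.ncard_coe_finset]
end

section
/- For every integer n ≥ 1, the number of Dyck paths of semilength n in which every peak and every valley has odd height equals C_{(n−1)/2} if n is odd, and equals 0 if n is even. -/
/-- A Dyck path of semilength `n`, encoded as a word over `Bool` with `true`
playing the role of `U` and `false` the role of `D`: it has length `2n`,
exactly `n` up-steps, and every prefix has at least as many `U`'s as `D`'s. -/
def IsDyckPath (n : ℕ) (w : List Bool) : Prop :=
  w.length = 2 * n ∧ w.count true = n ∧
    ∀ i, (w.take i).count false ≤ (w.take i).count true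

/-- Every peak (a `U` immediately followed by a `D`) of `w` has odd height,
the height being the number of `U`'s minus the number of `D`'s in the prefix
ending at the `U` of the peak. -/
def AllPeaksOdd (w : List Bool) : Prop :=
  ∀ i, w[i]? = some true → w[i + 1]? = some false →
    Odd ((w.take (i + 1)).count true - (w.take (i + 1)).count false)

/-- Every valley (a `D` immediately followed by a `U`) of `w` has odd height,
the height being the number of `U`'s minus the number of `D`'s in the prefix
ending at the `D` of the valley. -/
def AllValleysOdd (w : List Bool) : Prop :=
  ∀ i, w[i]? = some false → w[i + 1]? = some true →
    Odd ((w.take (i + 1)).count true - (w.take (i + 1)).count false)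

/-- doubling each letter -/
def dbl : List Bool → List Bool
  | [] => []
  | a :: l => a :: a :: dbl l

/-- taking every other letter -/
def eo : List Bool → List Bool
  | [] => []
  | [a] => [a]
  | a :: _ :: l => a :: eo l

@[simp] lemma dbl_nil : dbl [] = [] := rfl
@[simp] lemma dbl_cons (a : Bool) (l : List Bool) : dbl (a :: l) = a :: a :: dbl l := rfl

@[simp] lemma dbl_length (l : List Bool) : (dbl l).length = 2 * l.length := by
  induction l with
  | nil => simp
  | cons a l ih => simp [ih]; omega

@[simp] lemma dbl_count (b : Bool) (l : List Bool) : (dbl l).count b = 2 * l.count b := by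
  induction l with
  | nil => simp
  | cons a l ih => by_cases h : a = b <;> simp [List.count_cons, h, ih] <;> omega

lemma dbl_take (l : List Bool) (i : ℕ) : (dbl l).take (2 * i) = dbl (l.take i) := by
  induction l generalizing i with
  | nil => simp
  | cons a l ih =>
    cases i with
    | zero => simp
    | succ j =>
      have : 2 * (j + 1) = (2 * j) + 1 + 1 := by omega
      simp [this, List.take_succ_cons, ih]

lemma dbl_pair (l : List Bool) (k : ℕ) : (dbl l)[2 * k]? = (dbl l)[2 * k + 1]? := by
  induction l generalizing k with
  | nil => simp
  | cons a l ih =>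
    cases k with
    | zero => simp
    | succ j =>
      have h1 : 2 * (j + 1) = 2 * j + 1 + 1 := by omega
      rw [h1]
      simpa using ih j

lemma dbl_inj : Function.Injective dbl := by
  intro a b h
  induction a generalizing b with
  | nil => cases b with
    | nil => rfl
    | cons x l => simp at h
  | cons x l ih =>
    cases b with
    | nil => simp at h
    | cons y m => simp at h; simp [h.1, ih h.2]

lemma count_tf (l : List Bool) : l.count true + l.count false = l.length := by
  induction l with
  | nil => simp
  | cons a l ih => cases a <;> simp [List.count_cons] <;> omega

lemma pairs_eq_dbl : ∀ N (u : List Bool), u.length ≤ N → Even u.length →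
    (∀ k, 2 * k + 1 < u.length → u[2 * k]? = u[2 * k + 1]?) → u = dbl (eo u) := by
  intro N
  induction N with
  | zero =>
    intro u hu _ _
    have h0 : u.length = 0 := by omega
    rw [List.length_eq_zero_iff.mp h0]; rfl
  | succ N ih =>
    intro u hu he hp
    match u with
    | [] => rfl
    | [a] => simp at he
    | a :: b :: l =>
      have hab : a = b := by have := hp 0 (by simp); simpa using this
      have hl : l = dbl (eo l) := by
        refine ih l (by simp at hu; omega) (by simpa [Nat.even_add_one, parity_simps] using he) ?_
        intro k hk
        have := hp (k + 1) (by simp; omega)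
        have e1 : 2 * (k + 1) = (2 * k) + 1 + 1 := by omega
        have e2 : 2 * (k + 1) + 1 = (2 * k + 1) + 1 + 1 := by omega
        rw [e1] at this
        simpa using this
      rw [hab]
      show b :: b :: l = dbl (eo (b :: b :: l))
      rw [show eo (b :: b :: l) = b :: eo l from rfl, dbl_cons, ← hl]

lemma height_odd_iff (w : List Bool)
    (hpre : ∀ i, (w.take i).count false ≤ (w.take i).count true)
    (i : ℕ) (hi : i + 1 ≤ w.length) :
    Odd ((w.take (i + 1)).count true - (w.take (i + 1)).count false) ↔ Odd (i + 1) := by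
  have hf := hpre (i + 1)
  have hsum : (w.take (i + 1)).count true + (w.take (i + 1)).count false = i + 1 := by
    rw [count_tf, List.length_take]; omega
  rw [Nat.odd_iff, Nat.odd_iff]
  omega

/-- The `dbl` of a list with a prefix condition with slack `c` has prefix condition with
slack `2 * c`. -/
lemma dbl_prefix : ∀ (l : List Bool) (c : ℕ),
    (∀ i, (l.take i).count false ≤ (l.take i).count true + c) →
    ∀ j, ((dbl l).take j).count false ≤ ((dbl l).take j).count true + 2 * c := by
  intro l
  induction l with
  | nil => intro c _ j; simp
  | cons a l ih =>
    intro c h j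
    match j with
    | 0 => simp
    | 1 =>
      have h1 := h 1
      cases a <;> simp_all [List.count_cons] <;> omega
    | (j' + 2) =>
      cases a with
      | true =>
        have hl : ∀ i, (l.take i).count false ≤ (l.take i).count true + (c + 1) := by
          intro i
          have := h (i + 1)
          simp [List.count_cons, List.take_succ_cons] at this
          omega
        have key := ih (c + 1) hl j'
        show ((true :: true :: dbl l).take (j' + 2)).count false ≤ _ + 2 * c
        simp [List.count_cons, List.take_succ_cons]
        omega
      | false =>
        have hc : 1 ≤ c := by
          have := h 1
          simp [List.count_cons, List.take_succ_cons] at this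
          omega
        have hl : ∀ i, (l.take i).count false ≤ (l.take i).count true + (c - 1) := by
          intro i
          have := h (i + 1)
          simp [List.count_cons, List.take_succ_cons] at this
          omega
        have key := ih (c - 1) hl j'
        show ((false :: false :: dbl l).take (j' + 2)).count false ≤ _ + 2 * c
        simp [List.count_cons, List.take_succ_cons]
        omega

/-- No turn at odd positions. -/
lemma no_turn_odd (w : List Bool)
    (hpre : ∀ i, (w.take i).count false ≤ (w.take i).count true)
    (hP : AllPeaksOdd w) (hV : AllValleysOdd w)
    (i : ℕ) (hodd : Odd i) (a b : Bool)
    (ha : w[i]? = some a) (hb : w[i + 1]? = some b) : a = b := by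
  have hlen : i + 1 < w.length := (List.getElem?_eq_some_iff.mp hb).1
  have hpar : ¬ Odd ((w.take (i + 1)).count true - (w.take (i + 1)).count false) := by
    rw [height_odd_iff w hpre i (by omega)]
    rw [Nat.odd_iff] at hodd ⊢; omega
  cases a <;> cases b
  · rfl
  · exact absurd (hV i ha hb) hpar
  · exact absurd (hP i ha hb) hpar
  · rfl

lemma getElem?_append_lt {l₁ l₂ : List Bool} {i : ℕ} (h : i < l₁.length) :
    (l₁ ++ l₂)[i]? = l₁[i]? := by
  rw [List.getElem?_append]; simp [h]

lemma mem_iff (n : ℕ) (hn : 1 ≤ n) (w : List Bool) :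
    (IsDyckPath n w ∧ AllPeaksOdd w ∧ AllValleysOdd w) ↔
      (Odd n ∧ ∃ v, IsDyckPath ((n - 1) / 2) v ∧ w = true :: (dbl v ++ [false])) := by
  constructor
  · rintro ⟨⟨hlen, hct, hpre⟩, hP, hV⟩
    match w with
    | [] => simp at hlen; omega
    | a :: w' =>
      have ha : a = true := by
        cases a
        · have := hpre 1; simp [List.count_cons] at this
        · rfl
      subst ha
      have hw' : w' ≠ [] := by
        intro h; rw [h] at hlen; simp at hlen; omega
      obtain ⟨u, c, hw'eq⟩ : ∃ u c, w' = u ++ [c] :=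
        ⟨w'.dropLast, w'.getLast hw', (List.dropLast_append_getLast hw').symm⟩
      subst hw'eq
      have hul : u.length = 2 * n - 2 := by simp at hlen ⊢; omega
      have hcf : (true :: (u ++ [c])).count false = n := by
        have := count_tf (true :: (u ++ [c])); omega
      have htake : (true :: (u ++ [c])).take (2 * n - 1) = true :: u := by
        have h1 : 2 * n - 1 = (2 * n - 2) + 1 := by omega
        rw [h1, List.take_succ_cons,
          List.take_append_of_le_length (by omega),
          List.take_of_length_le (by omega)]
      have hc : c = false := by
        cases c
        · rfl
        · exfalso
          have hp := hpre (2 * n - 1)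
          rw [htake] at hp
          simp [List.count_cons, List.count_append] at hp hct hcf
          omega
      subst hc
      have hpair : ∀ k, 2 * k + 1 < u.length → u[2 * k]? = u[2 * k + 1]? := by
        intro k hk
        have h2k : 2 * k < u.length := by omega
        have e1 : (true :: (u ++ [false]))[2 * k + 1]? = u[2 * k]? := by
          rw [List.getElem?_cons_succ, getElem?_append_lt h2k]
        have e2 : (true :: (u ++ [false]))[2 * k + 2]? = u[2 * k + 1]? := by
          rw [show 2 * k + 2 = (2 * k + 1) + 1 from rfl, List.getElem?_cons_succ,
            getElem?_append_lt hk]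
        have hx := List.getElem?_eq_getElem h2k
        have hy := List.getElem?_eq_getElem hk
        have := no_turn_odd _ hpre hP hV (2 * k + 1) ⟨k, by omega⟩ (u[2 * k]) (u[2 * k + 1])
          (by rw [e1, hx]) (by rw [show 2 * k + 1 + 1 = 2 * k + 2 from rfl, e2, hy])
        rw [hx, hy, this]
      have hu : u = dbl (eo u) :=
        pairs_eq_dbl u.length u le_rfl (by rw [hul]; exact ⟨n - 1, by omega⟩) hpair
      set v := eo u with hv
      have hvl : 2 * v.length = 2 * n - 2 := by rw [← hul, hu]; simp
      have hvt : 1 + 2 * v.count true = n := by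
        have h1 : (true :: (u ++ [false])).count true = 1 + u.count true := by
          simp [List.count_cons, List.count_append]; omega
        have h2 : u.count true = 2 * v.count true := by rw [hu, dbl_count]
        omega
      have hodd : Odd n := ⟨v.count true, by omega⟩
      refine ⟨hodd, v, ⟨by omega, by omega, ?_⟩, by rw [hu]⟩
      intro i
      by_cases hi : 2 * i ≤ u.length
      · have hp := hpre (1 + 2 * i)
        have ht : (true :: (u ++ [false])).take (1 + 2 * i) = true :: dbl (v.take i) := by
          rw [show 1 + 2 * i = 2 * i + 1 from by omega, List.take_succ_cons,
            List.take_append_of_le_length hi]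
          conv_lhs => rw [hu]
          rw [dbl_take]
        rw [ht] at hp
        simp [List.count_cons, dbl_count] at hp
        omega
      · have hiv : v.length ≤ i := by omega
        rw [List.take_of_length_le hiv]
        have := count_tf v
        omega
  · rintro ⟨hodd, v, ⟨hvl, hvc, hvp⟩, rfl⟩
    obtain ⟨m, hm⟩ := hodd
    have hm2 : (n - 1) / 2 = m := by omega
    rw [hm2] at hvl hvc
    have hdl : (dbl v).length = 4 * m := by simp [hvl]; omega
    have hvf : v.count false = m := by have := count_tf v; omega
    have hpre : ∀ i, ((true :: (dbl v ++ [false])).take i).count false ≤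
        ((true :: (dbl v ++ [false])).take i).count true := by
      intro i
      cases i with
      | zero => simp
      | succ j =>
        rw [List.take_succ_cons]
        by_cases hj : j ≤ (dbl v).length
        · rw [List.take_append_of_le_length hj]
          have := dbl_prefix v 0 (by simpa using hvp) j
          simp [List.count_cons] at this ⊢
          omega
        · rw [List.take_of_length_le (by simp at hj ⊢; omega)]
          simp [List.count_cons, List.count_append, dbl_count, hvc, hvf]
    have hnoturn : ∀ i : ℕ, Odd i → i + 1 < (true :: (dbl v ++ [false])).length →
        (true :: (dbl v ++ [false]))[i]? = (true :: (dbl v ++ [false]))[i + 1]? := by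
      intro i hio hilt
      obtain ⟨k, hk⟩ := hio
      have hlt : 2 * k + 2 ≤ 4 * m := by
        simp [hdl] at hilt
        omega
      subst hk
      have e1 : (true :: (dbl v ++ [false]))[2 * k + 1]? = (dbl v)[2 * k]? := by
        rw [List.getElem?_cons_succ, getElem?_append_lt (by omega)]
      have e2 : (true :: (dbl v ++ [false]))[2 * k + 1 + 1]? = (dbl v)[2 * k + 1]? := by
        rw [show 2 * k + 1 + 1 = (2 * k + 1) + 1 from rfl, List.getElem?_cons_succ,
          getElem?_append_lt (by omega)]
      rw [e1, e2, dbl_pair]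
    have hlen : (true :: (dbl v ++ [false])).length = 2 * n := by simp [hvl]; omega
    refine ⟨⟨hlen, ?_, hpre⟩, ?_, ?_⟩
    · simp [List.count_cons, List.count_append, dbl_count, hvc]; omega
    · intro i hi hj
      rcases Nat.even_or_odd i with he | ho
      · have hl : i + 1 < (true :: (dbl v ++ [false])).length := (List.getElem?_eq_some_iff.mp hj).1
        rw [height_odd_iff _ hpre i (by omega)]
        rw [Nat.even_iff] at he; rw [Nat.odd_iff]; omega
      · have hl : i + 1 < (true :: (dbl v ++ [false])).length := (List.getElem?_eq_some_iff.mp hj).1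
        have := hnoturn i ho hl
        rw [hi, hj] at this
        simp at this
    · intro i hi hj
      rcases Nat.even_or_odd i with he | ho
      · have hl : i + 1 < (true :: (dbl v ++ [false])).length := (List.getElem?_eq_some_iff.mp hj).1
        rw [height_odd_iff _ hpre i (by omega)]
        rw [Nat.even_iff] at he; rw [Nat.odd_iff]; omega
      · have hl : i + 1 < (true :: (dbl v ++ [false])).length := (List.getElem?_eq_some_iff.mp hj).1
        have := hnoturn i ho hl
        rw [hi, hj] at this
        simp at this

open DyckStep

def toStep : Bool → DyckStep := fun b => bif b then U else D

def stepBool : DyckStep → Bool := fun s => match s with | U => true | D => false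

@[simp] lemma stepBool_toStep (b : Bool) : stepBool (toStep b) = b := by cases b <;> rfl
@[simp] lemma toStep_stepBool (s : DyckStep) : toStep (stepBool s) = s := by cases s <;> rfl

lemma count_toStep_U (l : List Bool) : (l.map toStep).count U = l.count true := by
  induction l with
  | nil => simp
  | cons a l ih => cases a <;> simp [toStep, List.count_cons, ih]

lemma count_toStep_D (l : List Bool) : (l.map toStep).count D = l.count false := by
  induction l with
  | nil => simp
  | cons a l ih => cases a <;> simp [toStep, List.count_cons, ih]

lemma count_stepBool_true (l : List DyckStep) : (l.map stepBool).count true = l.count U := by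
  induction l with
  | nil => simp
  | cons a l ih => cases a <;> simp [stepBool, List.count_cons, ih]

lemma count_stepBool_false (l : List DyckStep) : (l.map stepBool).count false = l.count D := by
  induction l with
  | nil => simp
  | cons a l ih => cases a <;> simp [stepBool, List.count_cons, ih]

lemma step_len (l : List DyckStep) : l.count U + l.count D = l.length := by
  induction l with
  | nil => simp
  | cons a l ih => cases a <;> simp [List.count_cons] <;> omega

lemma take_map_bool (l : List Bool) (n : ℕ) : (l.map toStep).take n = (l.take n).map toStep :=
  List.map_take.symm

lemma take_map_step (l : List DyckStep) (n : ℕ) : (l.map stepBool).take n = (l.take n).map stepBool :=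
  List.map_take.symm

def dyckEquiv (m : ℕ) : {v : List Bool // IsDyckPath m v} ≃ {p : DyckWord // p.semilength = m} where
  toFun x := ⟨⟨x.1.map toStep,
      by
        obtain ⟨hl, hc, -⟩ := x.2
        have hf : x.1.count false = m := by have := count_tf x.1; omega
        rw [count_toStep_U, count_toStep_D, hc, hf],
      by
        intro i
        obtain ⟨-, -, hp⟩ := x.2
        rw [take_map_bool, count_toStep_U, count_toStep_D]
        exact hp i⟩,
    by
      show (x.1.map toStep).count U = m
      rw [count_toStep_U]; exact x.2.2.1⟩
  invFun p := ⟨p.1.toList.map stepBool, by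
      have hU : p.1.toList.count U = m := p.2
      have hD : p.1.toList.count D = m := by rw [← p.1.count_U_eq_count_D, hU]
      refine ⟨?_, ?_, ?_⟩
      · rw [List.length_map, ← step_len, hU, hD]; omega
      · rw [count_stepBool_true, hU]
      · intro i
        rw [take_map_step, count_stepBool_true, count_stepBool_false]
        exact p.1.count_D_le_count_U i⟩
  left_inv x := Subtype.ext (by simp [List.map_map, Function.comp_def])
  right_inv p := Subtype.ext (DyckWord.ext (by simp [List.map_map, Function.comp_def]))

lemma card_isDyckPath (m : ℕ) : {v : List Bool | IsDyckPath m v}.ncard = catalan m := by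
  have h1 : Nat.card {v : List Bool // IsDyckPath m v} = catalan m := by
    rw [Nat.card_congr (dyckEquiv m), Nat.card_eq_fintype_card,
      DyckWord.card_dyckWord_semilength_eq_catalan]
  rw [← Nat.card_coe_set_eq]
  exact h1

/-- For `n ≥ 1`, the number of Dyck paths of semilength `n` in which every peak
and every valley has odd height is `C_{(n−1)/2}` if `n` is odd, and `0` if `n`
is even. -/
theorem dyck_paths_all_odd_heights (n : ℕ) (hn : 1 ≤ n) :
    {w : List Bool | IsDyckPath n w ∧ AllPeaksOdd w ∧ AllValleysOdd w}.ncard =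
      if Odd n then catalan ((n - 1) / 2) else 0 := by
  by_cases hodd : Odd n
  · have hinj : Function.Injective (fun v : List Bool => true :: (dbl v ++ [false])) := by
      intro a b h
      simp only [List.cons.injEq, true_and] at h
      exact dbl_inj (List.append_cancel_right h)
    have hset : {w : List Bool | IsDyckPath n w ∧ AllPeaksOdd w ∧ AllValleysOdd w} =
        (fun v : List Bool => true :: (dbl v ++ [false])) '' {v | IsDyckPath ((n - 1) / 2) v} := by
      ext w
      simp only [Set.mem_setOf_eq, Set.mem_image]
      rw [mem_iff n hn w]
      constructor
      · rintro ⟨-, v, hv, rfl⟩; exact ⟨v, hv, rfl⟩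
      · rintro ⟨v, hv, rfl⟩; exact ⟨hodd, v, hv, rfl⟩
    rw [hset, Set.ncard_image_of_injective _ hinj, card_isDyckPath, if_pos hodd]
  · have hset : {w : List Bool | IsDyckPath n w ∧ AllPeaksOdd w ∧ AllValleysOdd w} = ∅ := by
      ext w
      simp only [Set.mem_setOf_eq, Set.mem_empty_iff_false, iff_false]
      intro h
      exact hodd ((mem_iff n hn w).mp h).1
    rw [hset, Set.ncard_empty, if_neg hodd]
end

section
/- For integers 1 ≤ k ≤ m ≤ 2k−1, the number of biGrassmannian permutations of {1,…,m} that avoid id_k equals binom(2k−m+1, 3). -/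
set_option linter.unusedSectionVars false
set_option linter.unusedVariables false
set_option maxHeartbeats 1000000


def bsFun (a i j p : ℕ) : ℕ :=
  if p < a then p else if p < a + i then p + j
  else if p < a + i + j then p - i else p

lemma bsFun_lt {a i j p m : ℕ} (h : a + i + j ≤ m) (hp : p < m) : bsFun a i j p < m := by
  simp only [bsFun]; split_ifs <;> omega

lemma bsFun_inv (a i j p : ℕ) : bsFun a j i (bsFun a i j p) = p := by
  simp only [bsFun]; split_ifs <;> omega

def bsPerm (m a i j : ℕ) : Equiv.Perm (Fin m) where
  toFun p := if h : a + i + j ≤ m then ⟨bsFun a i j p, bsFun_lt h p.2⟩ else p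
  invFun p := if h : a + i + j ≤ m then ⟨bsFun a j i p, bsFun_lt (by omega) p.2⟩ else p
  left_inv p := by
    by_cases h : a + i + j ≤ m <;> simp [h]
    exact Fin.ext (bsFun_inv a i j p)
  right_inv p := by
    by_cases h : a + i + j ≤ m <;> simp [h]
    exact Fin.ext (by have := bsFun_inv a j i p; simpa using this)

lemma bsPerm_apply {m a i j : ℕ} (h : a + i + j ≤ m) (p : Fin m) :
    (bsPerm m a i j p : ℕ) = bsFun a i j p.1 := by
  simp [bsPerm, Equiv.coe_fn_mk, h]

lemma bsPerm_inv (m a i j : ℕ) : (bsPerm m a i j)⁻¹ = bsPerm m a j i := by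
  apply Equiv.ext
  intro p
  rw [Equiv.Perm.inv_def, Equiv.symm_apply_eq]
  apply Fin.ext
  by_cases h : a + i + j ≤ m
  · rw [bsPerm_apply h, bsPerm_apply (by omega)]
    exact (bsFun_inv a j i p).symm
  · have h2 : ¬ (a + j + i ≤ m) := by omega
    simp [bsPerm, h, h2, Equiv.coe_fn_mk]


/-- A permutation of `{1,…,n}` (modeled as `Fin n`) is Grassmannian if it has
at most one descent, where a descent is a position `i` with `σ(i) > σ(i+1)`. -/
def IsGrassmannian {n : ℕ} (σ : Equiv.Perm (Fin n)) : Prop :=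
  {i : ℕ | ∃ h : i + 1 < n, σ ⟨i + 1, h⟩ < σ ⟨i, Nat.lt_of_succ_lt h⟩}.Subsingleton

/-- `σ` avoids the identity pattern `id_k`: it has no increasing subsequence of
length `k`. -/
def AvoidsIdPat {m : ℕ} (k : ℕ) (σ : Equiv.Perm (Fin m)) : Prop :=
  ¬ ∃ f : Fin k → Fin m, StrictMono f ∧ StrictMono (fun i => σ (f i))

section
variable {m : ℕ} {f g : ℕ → ℕ}
  (hfm : ∀ p, p < m → f p < m)
  (hgm : ∀ p, p < m → g p < m)
  (hgf : ∀ p, g (f p) = p)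
  (hfg : ∀ p, f (g p) = p)
  {d : ℕ} (hdm : d + 1 < m) (hdd : f (d + 1) < f d)
  (hGr : ∀ p, p + 1 < m → p ≠ d → f p < f (p + 1))

include hGr in
lemma run_mono : ∀ p q, q < m → (d < p ∨ q ≤ d) → p ≤ q → f p + (q - p) ≤ f q := by
  intro p q
  induction q with
  | zero =>
    intro _ _ hp
    have : p = 0 := by omega
    subst this; omega
  | succ n ih =>
    intro hq hside hpq
    rcases Nat.lt_or_ge p (n+1) with h | h
    · have h1 : f p + (n - p) ≤ f n := ih (by omega) (by omega) (by omega)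
      have h2 : f n < f (n+1) := hGr n hq (by omega)
      omega
    · have : p = n + 1 := by omega
      subst this; omega

include hfm hgm hgf hfg hdm hdd hGr in
lemma prefix_fix : ∀ p, p < f (d + 1) → f p = p := by
  intro p
  induction p using Nat.strong_induction_on with
  | _ p IH =>
    intro hp
    have ha_lt : f (d+1) < m := hfm _ hdm
    have hpm : p < m := by omega
    have hq : g p < m := hgm _ hpm
    have hfq : f (g p) = p := hfg p
    -- g p ≤ d
    have hqd : g p ≤ d := by
      by_contra hc
      push_neg at hc
      have := run_mono hGr (d+1) (g p) hq (by omega) (by omega)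
      omega
    -- g p ≥ p
    have hqp : p ≤ g p := by
      by_contra hc
      push_neg at hc
      have := IH (g p) hc (by omega)
      omega
    -- f p ≥ p
    have hfp : p ≤ f p := by
      have h0 : f 0 + (p - 0) ≤ f p := run_mono hGr 0 p hpm (by omega) (by omega)
      omega
    rcases Nat.lt_or_ge p (g p) with h | h
    · have := run_mono hGr p (g p) hq (by omega) (by omega)
      omega
    · have : p = g p := by omega
      nth_rewrite 1 [this]
      rw [hfg]

include hfm hgm hgf hfg hdm hdd hGr in
lemma desc_bounds : f (d+1) ≤ d ∧ d + 1 ≤ f d := by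
  have ha_lt : f (d+1) < m := hfm _ hdm
  have had : f (d+1) ≤ d := by
    by_contra hc
    push_neg at hc
    have := prefix_fix hfm hgm hgf hfg hdm hdd hGr d (by omega)
    omega
  refine ⟨had, ?_⟩
  have hfd : d ≤ f d := by
    have := run_mono hGr 0 d (by omega) (by omega) (by omega)
    omega
  rcases Nat.lt_or_ge d (f d) with h | h
  · omega
  · -- f d = d ; contradiction
    exfalso
    have hfdd : f d = d := by omega
    set a := f (d+1) with ha
    have hfa_ge : a ≤ f a := by
      have := run_mono hGr 0 a (by omega) (by omega) (by omega)
      omega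
    have hfa_le : f a ≤ a := by
      have := run_mono hGr a d (by omega) (by omega) (by omega)
      omega
    have h1 : f a = a := by omega
    have h2 : g a = a := by nth_rewrite 1 [← h1]; exact hgf a
    have h3 : g (f (d+1)) = d + 1 := hgf (d+1)
    rw [← ha] at h3
    omega

include hfm hgm hgf hfg hdm hdd hGr in
lemma tail_fix : ∀ p, f d < p → p < m → f p = p := by
  have key : ∀ n p, m - p ≤ n → f d < p → p < m → f p = p := by
    intro n
    induction n with
    | zero => intro p h1 _ h3; omega
    | succ n ih =>
      intro p h1 hp hpm
      have hq : g p < m := hgm _ hpm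
      have hfq : f (g p) = p := hfg p
      have hd1 : d + 1 ≤ f d := (desc_bounds hfm hgm hgf hfg hdm hdd hGr).2
      -- g p ≥ d + 1
      have hqd : d + 1 ≤ g p := by
        by_contra hc
        push_neg at hc
        have := run_mono hGr (g p) d (by omega) (by omega) (by omega)
        omega
      -- g p ≤ p
      have hqp : g p ≤ p := by
        by_contra hc
        push_neg at hc
        have := ih (g p) (by omega) (by omega) hq
        omega
      rcases Nat.lt_or_ge (g p) p with h | h
      · exfalso
        have h1 : f (g p) + (p - g p) ≤ f p := run_mono hGr (g p) p hpm (by omega) (by omega)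
        have h2 : p < f p := by omega
        have h3 : f (f p) = f p := ih (f p) (by omega) (by omega) (hfm _ hpm)
        have h4 : g (f p) = p := hgf p
        have h5 : g (f (f p)) = f p := hgf (f p)
        rw [h3] at h5
        omega
      · have : p = g p := by omega
        nth_rewrite 1 [this]
        rw [hfg]
  intro p h1 h2
  exact key (m - p) p le_rfl h1 h2

include hfm hgm hgf hfg hdm hdd hGr in
lemma classify {e : ℕ} (hem : e + 1 < m) (hee : g (e + 1) < g e)
    (hGrg : ∀ p, p + 1 < m → p ≠ e → g p < g (p + 1))
    (hout : ∀ p, m ≤ p → f p = p) :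
    ∀ p, f p = bsFun (f (d+1)) (d + 1 - f (d+1)) (f d - d) p := by
  obtain ⟨had, hfd⟩ := desc_bounds hfm hgm hgf hfg hdm hdd hGr
  obtain ⟨hAe, hgE⟩ := desc_bounds hgm hfm hfg hgf hem hee hGrg
  set a := f (d+1) with ha
  set c := f d + 1 with hc
  set A := g (e+1) with hA
  set B := g e with hB
  have hcm : c ≤ m := by have := hfm d (by omega); omega
  have hBm : B + 1 ≤ m := by have := hgm e (by omega); omega
  have hga : g a = d + 1 := by
    have := hgf (d+1); rw [← ha] at this; exact this
  have hgc : g (c - 1) = d := by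
    have := hgf d
    have hcc : c - 1 = f d := by omega
    rw [hcc]; exact this
  have hfA : f A = e + 1 := by
    have := hfg (e+1); rw [← hA] at this; exact this
  have hfB : f B = e := by
    have := hfg e; rw [← hB] at this; exact this
  -- a = A
  have haA : a = A := by
    rcases Nat.lt_trichotomy a A with h | h | h
    · exfalso
      have := prefix_fix hgm hfm hfg hgf hem hee hGrg a h
      omega
    · exact h
    · exfalso
      have := prefix_fix hfm hgm hgf hfg hdm hdd hGr A h
      omega
  -- c - 1 = B
  have hcB : c - 1 = B := by
    rcases Nat.lt_trichotomy (c-1) B with h | h | h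
    · exfalso
      have := tail_fix hfm hgm hgf hfg hdm hdd hGr B (by omega) (by omega)
      omega
    · exact h
    · exfalso
      have := tail_fix hgm hfm hfg hgf hem hee hGrg (c-1) (by omega) (by omega)
      omega
  have hfa : f a = e + 1 := by rw [haA]; exact hfA
  -- e + 1 = a + (c - 1 - d)
  have he1 : e + 1 ≤ a + (c - 1 - d) := by
    have h1 := run_mono hGr a d (by omega) (by omega) (by omega)
    omega
  have he2 : a + (c - 1 - d) ≤ e + 1 := by
    have h1 := run_mono hGrg (e+1) (c-1) (by omega) (by omega) (by omega)
    omega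
  have hev : e + 1 = a + (c - 1 - d) := by omega
  -- middle values
  have hmid1 : ∀ p, a ≤ p → p ≤ d → f p = p + (c - 1 - d) := by
    intro p h1 h2
    have hlo := run_mono hGr a p (by omega) (by omega) h1
    have hhi := run_mono hGr p d (by omega) (by omega) h2
    omega
  have hmid2 : ∀ p, d + 1 ≤ p → p ≤ c - 1 → f p = p - (d + 1) + a := by
    intro p h1 h2
    have hlo := run_mono hGr (d+1) p (by omega) (by omega) h1
    have hhi := run_mono hGr p (c-1) (by omega) (by omega) h2
    rw [hcB] at hhi
    omega
  intro p
  rcases Nat.lt_or_ge p a with hp | hp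
  · have := prefix_fix hfm hgm hgf hfg hdm hdd hGr p hp
    simp only [bsFun]; split_ifs <;> omega
  rcases le_or_gt p d with hp2 | hp2
  · have := hmid1 p hp hp2
    simp only [bsFun]; split_ifs <;> omega
  rcases le_or_gt p (c-1) with hp3 | hp3
  · have := hmid2 p hp2 hp3
    simp only [bsFun]; split_ifs <;> omega
  rcases Nat.lt_or_ge p m with hp4 | hp4
  · have := tail_fix hfm hgm hgf hfg hdm hdd hGr p (by omega) hp4
    simp only [bsFun]; split_ifs <;> omega
  · have := hout p hp4
    simp only [bsFun]; split_ifs <;> omega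


include hfm hgm hgf hfg in
lemma noDesc_id (hf : ∀ p, p + 1 < m → f p < f (p + 1)) : ∀ p, p < m → f p = p := by
  have hGr' : ∀ p, p + 1 < m → p ≠ m → f p < f (p + 1) := fun p h _ => hf p h
  intro p
  induction p using Nat.strong_induction_on with
  | _ p IH =>
    intro hpm
    have hq : g p < m := hgm _ hpm
    have hfq : f (g p) = p := hfg p
    have hqp : p ≤ g p := by
      by_contra hc
      push_neg at hc
      have := IH (g p) hc hq
      omega
    have hfp : p ≤ f p := by
      have := run_mono (d := m) hGr' 0 p hpm (by omega) (by omega)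
      omega
    rcases Nat.lt_or_ge p (g p) with h | h
    · have := run_mono (d := m) hGr' p (g p) hq (by omega) (by omega)
      omega
    · have : p = g p := by omega
      nth_rewrite 1 [this]
      rw [hfg]

end


def permNat {m : ℕ} (σ : Equiv.Perm (Fin m)) : ℕ → ℕ :=
  fun p => if h : p < m then (σ ⟨p, h⟩ : ℕ) else p

lemma toNat_lt {m : ℕ} (σ : Equiv.Perm (Fin m)) {p : ℕ} (hp : p < m) : permNat σ p < m := by
  simp [permNat, hp]

lemma toNat_out {m : ℕ} (σ : Equiv.Perm (Fin m)) {p : ℕ} (hp : m ≤ p) : permNat σ p = p := by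
  unfold permNat
  rw [dif_neg (by omega)]

lemma toNat_inv {m : ℕ} (σ : Equiv.Perm (Fin m)) (p : ℕ) :
    permNat σ⁻¹ (permNat σ p) = p := by
  by_cases hp : p < m
  · have h1 : (σ ⟨p, hp⟩ : ℕ) < m := (σ ⟨p, hp⟩).2
    simp only [permNat, dif_pos hp, dif_pos h1]
    have : (⟨(σ ⟨p, hp⟩ : ℕ), h1⟩ : Fin m) = σ ⟨p, hp⟩ := rfl
    rw [this, Equiv.Perm.inv_def, Equiv.symm_apply_apply]
  · rw [toNat_out σ (by omega), toNat_out σ⁻¹ (by omega)]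

lemma isGrass_bsPerm {m a i j : ℕ} (h : a + i + j ≤ m) : IsGrassmannian (bsPerm m a i j) := by
  intro x hx y hy
  simp only [Set.mem_setOf_eq] at hx hy
  obtain ⟨hx1, hx2⟩ := hx
  obtain ⟨hy1, hy2⟩ := hy
  rw [Fin.lt_iff_val_lt_val, bsPerm_apply h, bsPerm_apply h] at hx2 hy2
  have ex : x = a + i - 1 := by
    simp only [bsFun] at hx2; split_ifs at hx2 <;> omega
  have ey : y = a + i - 1 := by
    simp only [bsFun] at hy2; split_ifs at hy2 <;> omega
  omega

lemma smFin {k : ℕ} {h : Fin k → ℕ} (hh : StrictMono h) : ∀ r : Fin k, (r : ℕ) ≤ h r := by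
  have key : ∀ n, ∀ r : Fin k, (r : ℕ) = n → n ≤ h r := by
    intro n
    induction n with
    | zero => intro r _; exact Nat.zero_le _
    | succ s ih =>
      intro r hr
      have hs : s < k := by omega
      have h1 := ih ⟨s, hs⟩ rfl
      have h2 : h ⟨s, hs⟩ < h r := hh (by simp [Fin.lt_def]; omega)
      omega
  intro r; exact key r.1 r rfl

lemma bsPerm_avoids {m a i j k : ℕ} (h : a + i + j ≤ m) (hk : 1 ≤ k) (hm1 : k ≤ m)
    (h1 : m < k + i) (h2 : m < k + j) : AvoidsIdPat k (bsPerm m a i j) := by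
  rintro ⟨F, hF, hsF⟩
  set u : Fin k → ℕ := fun r => (F r : ℕ) with hu_def
  have hu : StrictMono u := fun r s hrs => hF hrs
  set v : Fin k → ℕ := fun r => ((bsPerm m a i j) (F r) : ℕ) with hv_def
  have hv : StrictMono v := fun r s hrs => hsF hrs
  have hv_eq : ∀ r, v r = bsFun a i j (u r) := fun r => bsPerm_apply h (F r)
  have hum : ∀ r, u r < m := fun r => (F r).2
  have lastlt : k - 1 < k := by omega
  by_cases hcase : ∀ r, ¬ (a ≤ u r ∧ u r < a + i)
  · set w : Fin k → ℕ := fun r => if u r < a then u r else u r - i with hw_def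
    have hw : StrictMono w := by
      intro r s hrs
      have hr := hcase r
      have hs := hcase s
      have := hu hrs
      simp only [hw_def]; split_ifs <;> omega
    have hb : k - 1 ≤ w ⟨k-1, lastlt⟩ := smFin hw ⟨k - 1, lastlt⟩
    have hbd : w ⟨k-1, lastlt⟩ < m - i := by
      have := hum ⟨k-1, lastlt⟩
      have := hcase ⟨k-1, lastlt⟩
      simp only [hw_def]; split_ifs <;> omega
    omega
  · push_neg at hcase
    obtain ⟨r1, hr1a, hr1b⟩ := hcase
    have hcase2 : ∀ r, ¬ (a + i ≤ u r ∧ u r < a + i + j) := by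
      intro r2 hr2
      have h12 : r1 < r2 := by
        by_contra hc
        push_neg at hc
        have := hu.le_iff_le.mpr hc
        omega
      have hv12 : v r1 < v r2 := hv h12
      rw [hv_eq, hv_eq] at hv12
      simp only [bsFun] at hv12
      split_ifs at hv12 <;> omega
    set w : Fin k → ℕ := fun r => if u r < a + i then u r else u r - j with hw_def
    have hw : StrictMono w := by
      intro r s hrs
      have hr := hcase2 r
      have hs := hcase2 s
      have := hu hrs
      simp only [hw_def]; split_ifs <;> omega
    have hb : k - 1 ≤ w ⟨k-1, lastlt⟩ := smFin hw ⟨k - 1, lastlt⟩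
    have hbd : w ⟨k-1, lastlt⟩ < m - j := by
      have := hum ⟨k-1, lastlt⟩
      have := hcase2 ⟨k-1, lastlt⟩
      simp only [hw_def]; split_ifs <;> omega
    omega

section
variable {m k : ℕ} {σ : Equiv.Perm (Fin m)}

lemma permNat_inj {p q : ℕ} (h : permNat σ p = permNat σ q) : p = q := by
  rw [← toNat_inv σ p, ← toNat_inv σ q, h]

lemma grass_to_hGr (hG : IsGrassmannian σ) {d : ℕ} (hdm : d + 1 < m)
    (hdd : permNat σ (d+1) < permNat σ d) :
    ∀ p, p + 1 < m → p ≠ d → permNat σ p < permNat σ (p+1) := by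
  intro p hpm hpd
  have hd_mem : d ∈ {i : ℕ | ∃ h : i + 1 < m, σ ⟨i + 1, h⟩ < σ ⟨i, Nat.lt_of_succ_lt h⟩} := by
    refine ⟨hdm, ?_⟩
    rw [Fin.lt_def]
    simpa [permNat, hdm, Nat.lt_of_succ_lt hdm] using hdd
  have hnd : ¬ (σ ⟨p+1, hpm⟩ < σ ⟨p, Nat.lt_of_succ_lt hpm⟩) := by
    intro hlt
    exact hpd (hG ⟨hpm, hlt⟩ hd_mem)
  rw [Fin.lt_def, not_lt] at hnd
  have hne : (σ ⟨p, Nat.lt_of_succ_lt hpm⟩ : ℕ) ≠ (σ ⟨p+1, hpm⟩ : ℕ) := by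
    intro h
    have := σ.injective (Fin.ext h : σ ⟨p, Nat.lt_of_succ_lt hpm⟩ = σ ⟨p+1, hpm⟩)
    simp [Fin.ext_iff] at this
  simp only [permNat, dif_pos hpm, dif_pos (Nat.lt_of_succ_lt hpm)]
  omega

lemma exists_descent (hne : σ ≠ 1) :
    ∃ d, d + 1 < m ∧ permNat σ (d+1) < permNat σ d := by
  by_contra hc
  push_neg at hc
  apply hne
  have hmono : ∀ p, p + 1 < m → permNat σ p < permNat σ (p+1) := by
    intro p hpm
    have h1 := hc p hpm
    have h2 : permNat σ p ≠ permNat σ (p+1) := by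
      intro h; have := permNat_inj (σ := σ) h; omega
    omega
  have hid : ∀ p, p < m → permNat σ p = p :=
    noDesc_id (f := permNat σ) (g := permNat σ⁻¹)
      (fun p hp => toNat_lt σ hp) (fun p hp => toNat_lt σ⁻¹ hp)
      (toNat_inv σ) (fun p => by
        have := toNat_inv σ⁻¹ p
        rwa [inv_inv] at this) hmono
  apply Equiv.ext
  intro x
  apply Fin.ext
  have := hid x.1 x.2
  simpa [permNat, x.2] using this

lemma bsPerm_constraints {a i j : ℕ} (h : a + i + j ≤ m) (hm1 : k ≤ m)
    (hav : AvoidsIdPat k (bsPerm m a i j)) : m < k + i ∧ m < k + j := by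
  constructor
  · by_contra hc
    push_neg at hc  -- k + i ≤ m
    apply hav
    refine ⟨fun r => ⟨if (r : ℕ) < a then (r : ℕ) else (r : ℕ) + i,
      by have := r.2; split_ifs <;> omega⟩, ?_, ?_⟩
    · intro r s hrs
      rw [Fin.lt_def] at hrs ⊢
      dsimp only
      split_ifs <;> omega
    · intro r s hrs
      rw [Fin.lt_def] at hrs
      rw [Fin.lt_def, bsPerm_apply h, bsPerm_apply h]
      dsimp only
      have hr2 := r.2
      have hs2 := s.2
      unfold bsFun
      split_ifs <;> omega
  · by_contra hc
    push_neg at hc  -- k + j ≤ m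
    apply hav
    refine ⟨fun r => ⟨if (r : ℕ) < a + i then (r : ℕ) else (r : ℕ) + j,
      by have := r.2; split_ifs <;> omega⟩, ?_, ?_⟩
    · intro r s hrs
      rw [Fin.lt_def] at hrs ⊢
      dsimp only
      split_ifs <;> omega
    · intro r s hrs
      rw [Fin.lt_def] at hrs
      rw [Fin.lt_def, bsPerm_apply h, bsPerm_apply h]
      dsimp only
      have hr2 := r.2
      have hs2 := s.2
      unfold bsFun
      split_ifs <;> omega

lemma mem_iff_s17 (hk : 1 ≤ k) (hm1 : k ≤ m) :
    (IsGrassmannian σ ∧ IsGrassmannian σ⁻¹ ∧ AvoidsIdPat k σ) ↔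
      ∃ x : ℕ × ℕ × ℕ, (m < k + x.2.1 ∧ m < k + x.2.2 ∧ x.1 + x.2.1 + x.2.2 ≤ m) ∧
        bsPerm m x.1 x.2.1 x.2.2 = σ := by
  constructor
  · rintro ⟨hG, hG', hav⟩
    have hσne : σ ≠ 1 := by
      rintro rfl
      apply hav
      exact ⟨Fin.castLE hm1, Fin.strictMono_castLE hm1, by
        simpa using Fin.strictMono_castLE hm1⟩
    have hσne' : σ⁻¹ ≠ 1 := by
      intro h
      apply hσne
      rw [← inv_inv σ, h]
      simp
    obtain ⟨d, hdm, hdd⟩ := exists_descent hσne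
    obtain ⟨e, hem, hee⟩ := exists_descent hσne'
    have hfm : ∀ p, p < m → permNat σ p < m := fun p hp => toNat_lt σ hp
    have hgm : ∀ p, p < m → permNat σ⁻¹ p < m := fun p hp => toNat_lt σ⁻¹ hp
    have hgf : ∀ p, permNat σ⁻¹ (permNat σ p) = p := toNat_inv σ
    have hfg : ∀ p, permNat σ (permNat σ⁻¹ p) = p := fun p => by
      have := toNat_inv σ⁻¹ p
      rwa [inv_inv] at this
    have hGr := grass_to_hGr hG hdm hdd
    have hGrg := grass_to_hGr hG' hem hee
    have hout : ∀ p, m ≤ p → permNat σ p = p := fun p hp => toNat_out σ hp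
    have key := classify hfm hgm hgf hfg hdm hdd hGr hem hee hGrg hout
    obtain ⟨had, hfd⟩ := desc_bounds hfm hgm hgf hfg hdm hdd hGr
    set a := permNat σ (d+1) with ha
    set i := d + 1 - a with hi
    set j := permNat σ d - d with hj
    have hsum : a + i + j ≤ m := by
      have := hfm d (by omega)
      omega
    have hσ : bsPerm m a i j = σ := by
      apply Equiv.ext
      intro p
      apply Fin.ext
      rw [bsPerm_apply hsum]
      have h1 : permNat σ p.1 = (σ p : ℕ) := by
        simp [permNat, p.2]
      rw [← h1, key p.1]
    obtain ⟨hc1, hc2⟩ := bsPerm_constraints hsum hm1 (by rwa [hσ])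
    exact ⟨(a, i, j), ⟨hc1, hc2, hsum⟩, hσ⟩
  · rintro ⟨⟨a, i, j⟩, ⟨h1, h2, h3⟩, rfl⟩
    refine ⟨isGrass_bsPerm h3, ?_, bsPerm_avoids h3 hk hm1 h1 h2⟩
    rw [bsPerm_inv]
    exact isGrass_bsPerm (by omega)
end


open Finset in
lemma card_triples (N : ℕ) :
    {y : ℕ × ℕ × ℕ | y.1 < y.2.1 ∧ y.2.1 < y.2.2 ∧ y.2.2 ≤ N}.ncard = (N + 1).choose 3 := by
  classical
  set Fs : Finset (ℕ × ℕ × ℕ) :=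
    (range (N+1) ×ˢ range (N+1) ×ˢ range (N+1)).filter
      (fun y => y.1 < y.2.1 ∧ y.2.1 < y.2.2) with hFs
  have hset : {y : ℕ × ℕ × ℕ | y.1 < y.2.1 ∧ y.2.1 < y.2.2 ∧ y.2.2 ≤ N} = ↑Fs := by
    ext ⟨a, b, c⟩
    simp only [Set.mem_setOf_eq, hFs, coe_filter, mem_product, mem_range, Set.mem_setOf_eq]
    constructor
    · rintro ⟨h1, h2, h3⟩; exact ⟨⟨by omega, by omega, by omega⟩, h1, h2⟩
    · rintro ⟨⟨_, _, h3⟩, h1, h2⟩; exact ⟨h1, h2, by omega⟩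
  rw [hset, Set.ncard_coe_finset]
  have := Finset.card_powersetCard 3 (range (N+1))
  rw [card_range] at this
  rw [← this]
  apply Finset.card_bij (fun y _ => ({y.1, y.2.1, y.2.2} : Finset ℕ))
  · rintro ⟨a, b, c⟩ hy
    simp only [hFs, mem_filter, mem_product, mem_range] at hy
    obtain ⟨⟨ha, hb, hc⟩, h1, h2⟩ := hy
    rw [mem_powersetCard]
    constructor
    · intro x hx
      simp only [mem_insert, mem_singleton] at hx
      rw [mem_range]
      rcases hx with rfl | rfl | rfl <;> omega
    · rw [card_eq_three]
      exact ⟨a, b, c, by omega, by omega, by omega, rfl⟩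
  · rintro ⟨a1, b1, c1⟩ h1 ⟨a2, b2, c2⟩ h2 heq
    simp only [hFs, mem_filter, mem_product, mem_range] at h1 h2
    have hmem := Finset.ext_iff.mp heq
    simp only [mem_insert, mem_singleton] at hmem
    have e1 := hmem a1
    have e2 := hmem b1
    have e3 := hmem c1
    have e4 := hmem a2
    have e5 := hmem b2
    have e6 := hmem c2
    simp only [Prod.mk.injEq]
    omega
  · intro s hs
    rw [mem_powersetCard] at hs
    obtain ⟨hsub, hcard⟩ := hs
    obtain ⟨a, b, c, hab, hac, hbc, rfl⟩ := Finset.card_eq_three.mp hcard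
    have ha : a < N + 1 := by
      have := hsub (by simp : a ∈ ({a, b, c} : Finset ℕ)); rwa [mem_range] at this
    have hb : b < N + 1 := by
      have := hsub (by simp : b ∈ ({a, b, c} : Finset ℕ)); rwa [mem_range] at this
    have hc : c < N + 1 := by
      have := hsub (by simp : c ∈ ({a, b, c} : Finset ℕ)); rwa [mem_range] at this
    -- sort a b c
    obtain ⟨x, y, z, hxy, hyz, hperm⟩ :
        ∃ x y z, x < y ∧ y < z ∧ ({x, y, z} : Finset ℕ) = {a, b, c} := by
      rcases Nat.lt_trichotomy a b with h | h | h
      · rcases Nat.lt_trichotomy b c with h' | h' | h'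
        · exact ⟨a, b, c, h, h', rfl⟩
        · omega
        · rcases Nat.lt_trichotomy a c with h'' | h'' | h''
          · exact ⟨a, c, b, h'', h', by ext t; simp; tauto⟩
          · omega
          · exact ⟨c, a, b, h'', h, by ext t; simp; tauto⟩
      · omega
      · rcases Nat.lt_trichotomy a c with h' | h' | h'
        · exact ⟨b, a, c, h, h', by ext t; simp; tauto⟩
        · omega
        · rcases Nat.lt_trichotomy b c with h'' | h'' | h''
          · exact ⟨b, c, a, h'', h', by ext t; simp; tauto⟩
          · omega
          · exact ⟨c, b, a, h'', h, by ext t; simp; tauto⟩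
    have hx : x < N + 1 := by
      have : x ∈ ({a,b,c} : Finset ℕ) := by rw [← hperm]; simp
      simp at this; omega
    have hy2 : y < N + 1 := by
      have : y ∈ ({a,b,c} : Finset ℕ) := by rw [← hperm]; simp
      simp at this; omega
    have hz : z < N + 1 := by
      have : z ∈ ({a,b,c} : Finset ℕ) := by rw [← hperm]; simp
      simp at this; omega
    refine ⟨(x, y, z), ?_, hperm⟩
    simp only [hFs, mem_filter, mem_product, mem_range]
    exact ⟨⟨hx, hy2, hz⟩, hxy, hyz⟩

/-- For `1 ≤ k ≤ m ≤ 2k−1`, the number of biGrassmannian permutations of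
`{1,…,m}` (permutations `σ` with both `σ` and `σ⁻¹` Grassmannian) avoiding
`id_k` equals `binom(2k−m+1, 3)`. -/
theorem count_bigrassmannian_avoiding_identity (k m : ℕ) (hk : 1 ≤ k)
    (hm1 : k ≤ m) (hm2 : m ≤ 2 * k - 1) :
    {σ : Equiv.Perm (Fin m) |
        IsGrassmannian σ ∧ IsGrassmannian σ⁻¹ ∧ AvoidsIdPat k σ}.ncard =
      (2 * k - m + 1).choose 3 := by
  classical
  set T : Set (ℕ × ℕ × ℕ) :=
    {x | m < k + x.2.1 ∧ m < k + x.2.2 ∧ x.1 + x.2.1 + x.2.2 ≤ m} with hT_def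
  have hS : {σ : Equiv.Perm (Fin m) |
      IsGrassmannian σ ∧ IsGrassmannian σ⁻¹ ∧ AvoidsIdPat k σ} =
      (fun x : ℕ × ℕ × ℕ => bsPerm m x.1 x.2.1 x.2.2) '' T := by
    ext σ
    rw [Set.mem_setOf_eq, mem_iff_s17 hk hm1]
    simp only [Set.mem_image, hT_def, Set.mem_setOf_eq]
  rw [hS]
  -- injectivity of bsPerm on T
  have heval : ∀ a i j a' i' j' : ℕ, a + i + j ≤ m → a' + i' + j' ≤ m →
      bsPerm m a i j = bsPerm m a' i' j' → ∀ p, p < m → bsFun a i j p = bsFun a' i' j' p := by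
    intro a i j a' i' j' h h' heq p hp
    have := congrArg (fun σ : Equiv.Perm (Fin m) => ((σ ⟨p, hp⟩ : Fin m) : ℕ)) heq
    simpa [bsPerm_apply h, bsPerm_apply h'] using this
  have hinj : Set.InjOn (fun x : ℕ × ℕ × ℕ => bsPerm m x.1 x.2.1 x.2.2) T := by
    rintro ⟨a, i, j⟩ ⟨h1, h2, h3⟩ ⟨a', i', j'⟩ ⟨h1', h2', h3'⟩ heq
    simp only at heq
    dsimp only at h1 h2 h3 h1' h2' h3'
    have hi1 : 1 ≤ i := by omega
    have hj1 : 1 ≤ j := by omega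
    have hi1' : 1 ≤ i' := by omega
    have hj1' : 1 ≤ j' := by omega
    have ev := heval a i j a' i' j' h3 h3' heq
    have ev' := heval a j i a' j' i' (by omega) (by omega)
      (by rw [← bsPerm_inv m a i j, ← bsPerm_inv m a' i' j', heq])
    have haa : a = a' := by
      rcases Nat.lt_trichotomy a a' with h | h | h
      · have e := ev a (by omega)
        simp only [bsFun] at e
        split_ifs at e <;> omega
      · exact h
      · have e := ev a' (by omega)
        simp only [bsFun] at e
        split_ifs at e <;> omega
    subst haa
    have hjj : j = j' := by
      have e := ev a (by omega)
      simp only [bsFun] at e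
      split_ifs at e <;> omega
    have hii : i = i' := by
      have e := ev' a (by omega)
      simp only [bsFun] at e
      split_ifs at e <;> omega
    simp only [Prod.mk.injEq]
    exact ⟨trivial, hii, hjj⟩
  rw [Set.ncard_image_of_injOn hinj]
  -- T as image of sorted triples
  set N := 2 * k - m with hN
  set G : ℕ × ℕ × ℕ → ℕ × ℕ × ℕ :=
    fun y => (y.1, y.2.1 - y.1 + (m - k), y.2.2 - y.2.1 + (m - k)) with hG_def
  have hTG : T = G '' {y : ℕ × ℕ × ℕ | y.1 < y.2.1 ∧ y.2.1 < y.2.2 ∧ y.2.2 ≤ N} := by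
    ext ⟨a, i, j⟩
    simp only [hT_def, Set.mem_setOf_eq, Set.mem_image, hG_def, Prod.mk.injEq, Prod.exists]
    constructor
    · rintro ⟨h1, h2, h3⟩
      exact ⟨a, a + i - (m - k), a + i + j - 2 * (m - k),
        ⟨by omega, by omega, by omega⟩, by omega, by omega, by omega⟩
    · rintro ⟨x, y, z, ⟨g1, g2, g3⟩, e1, e2, e3⟩
      omega
  have hGinj : Set.InjOn G {y : ℕ × ℕ × ℕ | y.1 < y.2.1 ∧ y.2.1 < y.2.2 ∧ y.2.2 ≤ N} := by
    rintro ⟨x, y, z⟩ ⟨g1, g2, g3⟩ ⟨x', y', z'⟩ ⟨g1', g2', g3'⟩ heq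
    dsimp only at g1 g2 g3 g1' g2' g3'
    simp only [hG_def, Prod.mk.injEq] at heq ⊢
    omega
  rw [hTG, Set.ncard_image_of_injOn hGinj, card_triples N]
end

section
/- For integers 1 ≤ k ≤ m ≤ 2k−1, the number of Grassmannian involutions of {1,…,m} that avoid id_k equals ⌊(2k−m)²/4⌋. -/
/-!
A Grassmannian involution `σ` of `{0, …, m-1}` is increasing on `[0, p]` and on `(p, m)`, where
`p` is its descent. An involution that is increasing on a set fixes every point it maps into that
set, so each moved point crosses `p`. Counting the moved points between the smallest one `a` and
any moved `i ≤ p` shows that `σ` translates `[a, p]` onto `(p, 2p + 1 - a]` and back: `σ` swaps two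
adjacent blocks of some length `r`. Such a block swap has longest increasing subsequences of length
`m - r`, so it avoids `id_k` iff `r > m - k`, and the admissible pairs `(a, r)` number
`⌊(2k - m)² / 4⌋`.
-/

open Function Set

/-- The involution exchanging the blocks `[a, a + r)` and `[a + r, a + 2r)` by translation, or the
identity when they do not fit below `m`. -/
def blockSwapFun (m a r i : ℕ) : ℕ :=
  if a + 2 * r ≤ m ∧ a ≤ i ∧ i < a + r then i + r
  else if a + 2 * r ≤ m ∧ a + r ≤ i ∧ i < a + 2 * r then i - r
  else i

theorem blockSwapFun_lt {m a r i : ℕ} (hi : i < m) : blockSwapFun m a r i < m := by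
  unfold blockSwapFun; split_ifs <;> omega

theorem blockSwapFun_involutive (m a r : ℕ) : Involutive (blockSwapFun m a r) := by
  intro i; unfold blockSwapFun; split_ifs <;> omega

def blockSwap (m a r : ℕ) : Equiv.Perm (Fin m) :=
  Involutive.toPerm (fun i => ⟨blockSwapFun m a r i, blockSwapFun_lt i.2⟩)
    fun i => Fin.ext (blockSwapFun_involutive m a r i)

@[simp]
theorem blockSwap_apply_val (m a r : ℕ) (i : Fin m) :
    (blockSwap m a r i : ℕ) = blockSwapFun m a r i := rfl

theorem blockSwap_mul_self (m a r : ℕ) : blockSwap m a r * blockSwap m a r = 1 := by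
  ext i
  exact blockSwapFun_involutive m a r i

theorem isGrassmannian_blockSwap (m a r : ℕ) : IsGrassmannian (blockSwap m a r) := by
  have hdescent : ∀ {i : ℕ} (h : i + 1 < m),
      blockSwap m a r ⟨i + 1, h⟩ < blockSwap m a r ⟨i, Nat.lt_of_succ_lt h⟩ → i + 1 = a + r := by
    intro i h hlt
    change blockSwapFun m a r (i + 1) < blockSwapFun m a r i at hlt
    unfold blockSwapFun at hlt
    split_ifs at hlt <;> omega
  rintro i ⟨hi, hi'⟩ j ⟨hj, hj'⟩
  have := hdescent hi hi'
  have := hdescent hj hj'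
  omega

theorem blockSwap_injOn (m : ℕ) :
    InjOn (fun q : ℕ × ℕ => blockSwap m q.1 q.2) {q | 0 < q.2 ∧ q.1 + 2 * q.2 ≤ m} := by
  rintro ⟨a, r⟩ ⟨hr, ham⟩ ⟨a', r'⟩ ⟨hr', ham'⟩ he
  have hval : ∀ i (hi : i < m), blockSwapFun m a r i = blockSwapFun m a' r' i := fun i hi =>
    congrArg (fun σ : Equiv.Perm (Fin m) => (σ ⟨i, hi⟩ : ℕ)) he
  have h1 := hval a (by omega)
  have h2 := hval a' (by omega)
  simp only [Prod.mk.injEq]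
  unfold blockSwapFun at h1 h2
  split_ifs at h1 h2 <;> omega

theorem add_le_of_injective_of_forall_notMem_Ico {k m c r : ℕ} {f : Fin k → Fin m}
    (hf : Injective f) (hc : c + r ≤ m) (hfc : ∀ t, (f t : ℕ) ∉ Finset.Ico c (c + r)) :
    k + r ≤ m := by
  have hsub : Finset.univ.image (Fin.val ∘ f) ⊆ Finset.range m \ Finset.Ico c (c + r) := by
    intro x hx
    obtain ⟨t, -, rfl⟩ := Finset.mem_image.1 hx
    exact Finset.mem_sdiff.2 ⟨Finset.mem_range.2 (f t).2, hfc t⟩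
  have := Finset.card_le_card hsub
  rw [Finset.card_image_of_injective _ (Fin.val_injective.comp hf), Finset.card_univ,
    Fintype.card_fin, Finset.card_sdiff_of_subset (fun x hx => by simp at hx ⊢; omega),
    Nat.card_Ico, Finset.card_range] at this
  omega

theorem avoidsIdPat_blockSwap_iff {k m a r : ℕ} (h : a + 2 * r ≤ m) :
    AvoidsIdPat k (blockSwap m a r) ↔ m < k + r := by
  constructor
  · intro hav
    by_contra hle
    refine hav ⟨fun t => ⟨if (t : ℕ) < a + r then t else t + r, by split_ifs <;> omega⟩,
      fun s t hst => ?_, fun s t hst => ?_⟩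
    · rw [Fin.lt_def] at hst ⊢
      dsimp only
      split_ifs <;> omega
    · rw [Fin.lt_def] at hst ⊢
      simp only [blockSwap_apply_val]
      unfold blockSwapFun
      split_ifs <;> omega
  · rintro hlt ⟨f, hf, hσf⟩
    have hmiss : (∀ t, (f t : ℕ) ∉ Finset.Ico a (a + r)) ∨
        ∀ t, (f t : ℕ) ∉ Finset.Ico (a + r) (a + r + r) := by
      by_contra hboth
      simp only [not_or, not_forall, not_not, Finset.mem_Ico] at hboth
      obtain ⟨⟨s, hs⟩, ⟨t, ht⟩⟩ := hboth
      have := hσf (hf.lt_iff_lt.1 (Fin.lt_def.2 (by omega)) : s < t)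
      rw [Fin.lt_def, blockSwap_apply_val, blockSwap_apply_val] at this
      unfold blockSwapFun at this
      split_ifs at this <;> omega
    rcases hmiss with hfc | hfc
    · have := add_le_of_injective_of_forall_notMem_Ico hf.injective (by omega) hfc
      omega
    · have := add_le_of_injective_of_forall_notMem_Ico hf.injective (by omega) hfc
      omega

theorem StrictMonoOn.apply_eq_self_of_involutive {α : Type*} [LinearOrder α] {f : α → α}
    {s : Set α} (hf : StrictMonoOn f s) (hinv : Involutive f) {x : α} (hx : x ∈ s)
    (hfx : f x ∈ s) : f x = x := by
  rcases lt_trichotomy (f x) x with h | h | h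
  · have := hf hfx hx h
    rw [hinv x] at this
    exact absurd this (lt_asymm h)
  · exact h
  · have := hf hx hfx h
    rw [hinv x] at this
    exact absurd this (lt_asymm h)

/-- `v` is an involution of `ℕ` increasing on `[0, p]` and on `(p, ∞)`: a Grassmannian involution
of `Fin m` with its descent at `p`, extended by the identity. -/
structure IsGrassmannianInvolutionAt (v : ℕ → ℕ) (p : ℕ) : Prop where
  involutive : Involutive v
  strictMonoOn_Iic : StrictMonoOn v (Iic p)
  strictMonoOn_Ioi : StrictMonoOn v (Ioi p)

namespace IsGrassmannianInvolutionAt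

variable {v : ℕ → ℕ} {m p a i : ℕ}

theorem lt_apply_of_le (h : IsGrassmannianInvolutionAt v p) (hi : i ≤ p) (hvi : v i ≠ i) :
    p < v i := by
  by_contra hle
  exact hvi (h.strictMonoOn_Iic.apply_eq_self_of_involutive h.involutive hi (not_lt.1 hle))

theorem apply_le_of_lt (h : IsGrassmannianInvolutionAt v p) (hi : p < i) (hvi : v i ≠ i) :
    v i ≤ p := by
  by_contra hlt
  exact hvi (h.strictMonoOn_Ioi.apply_eq_self_of_involutive h.involutive hi (not_le.1 hlt))

theorem le_apply_of_isLeast (h : IsGrassmannianInvolutionAt v p)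
    (ha : IsLeast {i | v i ≠ i} a) (hvi : v i ≠ i) : a ≤ v i :=
  ha.2 fun hfix => hvi (by rw [← hfix, h.involutive])

theorem le_of_isLeast (h : IsGrassmannianInvolutionAt v p) (ha : IsLeast {i | v i ≠ i} a) :
    a ≤ p := by
  by_contra hpa
  have := h.apply_le_of_lt (not_le.1 hpa) ha.1
  have := h.le_apply_of_isLeast ha ha.1
  omega

theorem apply_ne_self (h : IsGrassmannianInvolutionAt v p) (ha : IsLeast {i | v i ≠ i} a)
    (hai : a ≤ i) (hip : i ≤ p) : v i ≠ i := by
  intro hfix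
  rcases hai.eq_or_lt with rfl | hlt
  · exact ha.1 hfix
  · have hap := h.le_of_isLeast ha
    have := h.strictMonoOn_Iic hap hip hlt
    have := h.lt_apply_of_le hap ha.1
    omega

/-- `v` maps `[a, i)` injectively into `(p, v i)` and back, so both have the same size. -/
theorem apply_eq_add (h : IsGrassmannianInvolutionAt v p) (ha : IsLeast {i | v i ≠ i} a)
    (hai : a ≤ i) (hip : i ≤ p) : v i = i + (p + 1 - a) := by
  have hvi : p < v i := h.lt_apply_of_le hip (h.apply_ne_self ha hai hip)
  have hle : (Finset.Ico a i).card ≤ (Finset.Ioo p (v i)).card := by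
    refine Finset.card_le_card_of_injOn v (fun c hc => ?_) h.involutive.injective.injOn
    simp only [Finset.coe_Ico, Finset.coe_Ioo, mem_Ico, mem_Ioo] at hc ⊢
    exact ⟨h.lt_apply_of_le (by omega) (h.apply_ne_self ha hc.1 (by omega)),
      h.strictMonoOn_Iic (show c ≤ p by omega) hip hc.2⟩
  have hge : (Finset.Ioo p (v i)).card ≤ (Finset.Ico a i).card := by
    refine Finset.card_le_card_of_injOn v (fun j hj => ?_) h.involutive.injective.injOn
    simp only [Finset.coe_Ico, Finset.coe_Ioo, mem_Ico, mem_Ioo] at hj ⊢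
    have hvj : v j < i := by
      simpa only [h.involutive i] using h.strictMonoOn_Ioi hj.1 hvi hj.2
    have hvj_ne : v j ≠ j := by omega
    exact ⟨h.le_apply_of_isLeast ha hvj_ne, hvj⟩
  simp only [Nat.card_Ico, Nat.card_Ioo] at hle hge
  omega

theorem apply_eq_sub (h : IsGrassmannianInvolutionAt v p) (ha : IsLeast {i | v i ≠ i} a)
    (hpi : p < i) (hir : i ≤ p + (p + 1 - a)) : v i = i - (p + 1 - a) := by
  have hvp := h.apply_eq_add ha (h.le_of_isLeast ha) le_rfl
  have hvi : v i ≠ i := by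
    intro hfix
    have := h.strictMonoOn_Ioi.monotoneOn hpi (show p < v p by omega) (hvp ▸ hir)
    rw [h.involutive p] at this
    omega
  have := h.apply_eq_add ha (h.le_apply_of_isLeast ha hvi) (h.apply_le_of_lt hpi hvi)
  rw [h.involutive i] at this
  exact (Nat.sub_eq_of_eq_add this).symm

theorem apply_eq_self_of_lt (h : IsGrassmannianInvolutionAt v p) (ha : IsLeast {i | v i ≠ i} a)
    (hi : p + (p + 1 - a) < i) : v i = i := by
  by_contra hvi
  have hvip := h.apply_le_of_lt (by omega) hvi
  have := h.apply_eq_add ha (h.le_apply_of_isLeast ha hvi) hvip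
  rw [h.involutive i] at this
  omega

theorem exists_eq_blockSwapFun (h : IsGrassmannianInvolutionAt v p)
    (hfix : ∀ i, m ≤ i → v i = i) :
    ∃ a r, a + 2 * r ≤ m ∧ ∀ i, v i = blockSwapFun m a r i := by
  by_cases hid : ∃ i, v i ≠ i
  swap
  · push Not at hid
    exact ⟨0, 0, Nat.zero_le m, fun i => by simp [blockSwapFun, hid]⟩
  obtain ⟨a, ha⟩ : ∃ a, IsLeast {i | v i ≠ i} a :=
    ⟨Nat.find hid, Nat.find_spec hid, fun i hi => Nat.find_min' hid hi⟩
  have hap := h.le_of_isLeast ha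
  have hm : p + (p + 1 - a) < m := by
    by_contra hle
    have hvp := h.apply_eq_add ha hap le_rfl
    have := hfix _ (not_lt.1 hle)
    rw [← hvp, h.involutive p] at this
    omega
  refine ⟨a, p + 1 - a, by omega, fun i => ?_⟩
  unfold blockSwapFun
  rcases lt_or_ge i a with hia | hai
  · have : v i = i := by
      by_contra hvi
      exact absurd (ha.2 hvi) (not_le.2 hia)
    rw [this]; split_ifs <;> omega
  rcases le_or_gt i p with hip | hpi
  · rw [h.apply_eq_add ha hai hip]; split_ifs <;> omega
  rcases le_or_gt i (p + (p + 1 - a)) with hir | hri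
  · rw [h.apply_eq_sub ha hpi hir]; split_ifs <;> omega
  · rw [h.apply_eq_self_of_lt ha hri]; split_ifs <;> omega

end IsGrassmannianInvolutionAt

theorem Equiv.Perm.extendDomain_equivSubtype_apply_of_lt {m i : ℕ} (σ : Equiv.Perm (Fin m))
    (hi : i < m) : σ.extendDomain Fin.equivSubtype i = σ ⟨i, hi⟩ := by
  rw [Equiv.Perm.extendDomain_apply_subtype σ Fin.equivSubtype (b := i) hi]
  rfl

theorem Equiv.Perm.extendDomain_equivSubtype_apply_of_le {m i : ℕ} (σ : Equiv.Perm (Fin m))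
    (hi : m ≤ i) : σ.extendDomain Fin.equivSubtype i = i :=
  Equiv.Perm.extendDomain_apply_not_subtype _ _ (not_lt.2 hi)

theorem IsGrassmannian.exists_isGrassmannianInvolutionAt_extendDomain {m : ℕ} {σ : Equiv.Perm (Fin m)}
    (hσ : IsGrassmannian σ) (hinv : σ * σ = 1) :
    ∃ p, IsGrassmannianInvolutionAt (σ.extendDomain Fin.equivSubtype) p := by
  obtain ⟨p, hp⟩ : ∃ p, ∀ i (h : i + 1 < m),
      σ ⟨i + 1, h⟩ < σ ⟨i, Nat.lt_of_succ_lt h⟩ → i = p := by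
    rcases hσ.eq_empty_or_singleton with hempty | ⟨p, hsingle⟩
    · exact ⟨0, fun i h hlt => absurd (hempty ▸ ⟨h, hlt⟩ : i ∈ (∅ : Set ℕ)) id⟩
    · exact ⟨p, fun i h hlt => (hsingle ▸ ⟨h, hlt⟩ : i ∈ ({p} : Set ℕ))⟩
  have hstep : ∀ i, i ≠ p →
      σ.extendDomain Fin.equivSubtype i < σ.extendDomain Fin.equivSubtype (i + 1) := by
    intro i hip
    rcases lt_or_ge (i + 1) m with h | h
    · rw [σ.extendDomain_equivSubtype_apply_of_lt (Nat.lt_of_succ_lt h),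
        σ.extendDomain_equivSubtype_apply_of_lt h, ← Fin.lt_def]
      exact lt_of_le_of_ne (not_lt.1 fun hlt => hip (hp i h hlt))
        (σ.injective.ne (by simp [Fin.ext_iff]))
    · rw [σ.extendDomain_equivSubtype_apply_of_le h]
      rcases lt_or_ge i m with hi | hi
      · rw [σ.extendDomain_equivSubtype_apply_of_lt hi]
        omega
      · rw [σ.extendDomain_equivSubtype_apply_of_le hi]
        omega
  refine ⟨p, ⟨fun i => ?_, ?_, ?_⟩⟩
  · rw [← Equiv.Perm.mul_apply, Equiv.Perm.extendDomain_mul, hinv, Equiv.Perm.extendDomain_one,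
      Equiv.Perm.one_apply]
  · exact strictMonoOn_of_lt_add_one ordConnected_Iic fun i _ _ hi => hstep i (by simp at hi; omega)
  · exact strictMonoOn_of_lt_add_one ordConnected_Ioi fun i _ hi _ => hstep i (ne_of_gt hi)

theorem exists_eq_blockSwap_of_isGrassmannian {m : ℕ} {σ : Equiv.Perm (Fin m)}
    (hσ : IsGrassmannian σ) (hinv : σ * σ = 1) :
    ∃ a r, a + 2 * r ≤ m ∧ σ = blockSwap m a r := by
  obtain ⟨p, hp⟩ := hσ.exists_isGrassmannianInvolutionAt_extendDomain hinv
  obtain ⟨a, r, hm, hv⟩ :=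
    hp.exists_eq_blockSwapFun fun i hi => σ.extendDomain_equivSubtype_apply_of_le hi
  refine ⟨a, r, hm, Equiv.ext fun i => Fin.ext ?_⟩
  rw [blockSwap_apply_val, ← hv, σ.extendDomain_equivSubtype_apply_of_lt i.2]

theorem card_filter_add_two_mul_add_two_le (n : ℕ) :
    ((Finset.range n ×ˢ Finset.range n).filter fun q : ℕ × ℕ => q.1 + 2 * q.2 + 2 ≤ n).card =
      n ^ 2 / 4 := by
  induction n using Nat.twoStepInduction with
  | zero => rfl
  | one => rfl
  | more n ih _ =>
    have hsplit : ((Finset.range (n + 2) ×ˢ Finset.range (n + 2)).filter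
          fun q : ℕ × ℕ => q.1 + 2 * q.2 + 2 ≤ n + 2) =
        (Finset.range (n + 1)).image (fun a => (a, 0)) ∪
          ((Finset.range n ×ˢ Finset.range n).filter
            fun q : ℕ × ℕ => q.1 + 2 * q.2 + 2 ≤ n).image fun q => (q.1, q.2 + 1) := by
      ext ⟨a, s⟩
      simp only [Finset.mem_filter, Finset.mem_product, Finset.mem_range, Finset.mem_union,
        Finset.mem_image, Prod.mk.injEq, Prod.exists]
      constructor
      · rintro ⟨-, hs⟩
        rcases s with _ | s
        · exact Or.inl ⟨a, by omega, rfl, rfl⟩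
        · exact Or.inr ⟨a, s, ⟨⟨by omega, by omega⟩, by omega⟩, rfl, rfl⟩
      · rintro (⟨b, hb, rfl, rfl⟩ | ⟨b, t, ⟨-, hbt⟩, rfl, rfl⟩) <;> omega
    have hdisj : Disjoint ((Finset.range (n + 1)).image fun a => (a, 0))
        (((Finset.range n ×ˢ Finset.range n).filter
          fun q : ℕ × ℕ => q.1 + 2 * q.2 + 2 ≤ n).image fun q => (q.1, q.2 + 1)) := by
      simp only [Finset.disjoint_left, Finset.mem_image]
      rintro _ ⟨a, -, rfl⟩ ⟨q, -, h⟩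
      simp at h
    rw [hsplit, Finset.card_union_of_disjoint hdisj,
      Finset.card_image_of_injective _ fun a b h => (Prod.mk.inj h).1,
      Finset.card_image_of_injective _ fun q q' h => Prod.ext (Prod.mk.inj h).1
        (Nat.succ_injective (Prod.mk.inj h).2),
      Finset.card_range, ih]
    have : (n + 2) ^ 2 = n ^ 2 + (n + 1) * 4 := by ring
    rw [this, Nat.add_mul_div_right _ _ (by norm_num)]
    omega

def blockSwapParams (k m : ℕ) : Finset (ℕ × ℕ) :=
  (Finset.range (m + 1) ×ˢ Finset.range (m + 1)).filter fun q => m < k + q.2 ∧ q.1 + 2 * q.2 ≤ m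

theorem card_blockSwapParams {k m : ℕ} (hkm : k ≤ m) :
    (blockSwapParams k m).card = (2 * k - m) ^ 2 / 4 := by
  rw [← card_filter_add_two_mul_add_two_le]
  refine Finset.card_nbij' (fun q => (q.1, q.2 - (m - k + 1))) (fun q => (q.1, q.2 + (m - k + 1)))
    ?_ ?_ ?_ ?_ <;>
  · rintro ⟨a, r⟩ hq
    simp only [blockSwapParams, Finset.mem_coe, Finset.mem_filter, Finset.mem_product,
      Finset.mem_range, Prod.mk.injEq, true_and] at hq ⊢
    omega

theorem isGrassmannian_involution_avoidsIdPat_iff {k m : ℕ} {σ : Equiv.Perm (Fin m)} :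
    IsGrassmannian σ ∧ σ * σ = 1 ∧ AvoidsIdPat k σ ↔
      ∃ q ∈ blockSwapParams k m, blockSwap m q.1 q.2 = σ := by
  constructor
  · rintro ⟨hσ, hinv, hav⟩
    obtain ⟨a, r, hm, rfl⟩ := exists_eq_blockSwap_of_isGrassmannian hσ hinv
    refine ⟨(a, r), ?_, rfl⟩
    have := (avoidsIdPat_blockSwap_iff hm).1 hav
    simp only [blockSwapParams, Finset.mem_filter, Finset.mem_product, Finset.mem_range]
    omega
  · rintro ⟨⟨a, r⟩, hq, rfl⟩
    simp only [blockSwapParams, Finset.mem_filter, Finset.mem_product, Finset.mem_range] at hq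
    exact ⟨isGrassmannian_blockSwap m a r, blockSwap_mul_self m a r,
      (avoidsIdPat_blockSwap_iff hq.2.2).2 hq.2.1⟩

theorem count_grassmannian_involutions_avoiding_identity_general (k m : ℕ)
    (hm1 : k ≤ m) :
    {σ : Equiv.Perm (Fin m) |
        IsGrassmannian σ ∧ σ * σ = 1 ∧ AvoidsIdPat k σ}.ncard =
      (2 * k - m) ^ 2 / 4 := by
  have hset : {σ : Equiv.Perm (Fin m) | IsGrassmannian σ ∧ σ * σ = 1 ∧ AvoidsIdPat k σ} =
      (blockSwapParams k m).image fun q => blockSwap m q.1 q.2 := by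
    ext σ
    simp only [mem_ofPred_eq, Finset.coe_image, mem_image, Finset.mem_coe,
      isGrassmannian_involution_avoidsIdPat_iff]
  have hinj : InjOn (fun q : ℕ × ℕ => blockSwap m q.1 q.2) (blockSwapParams k m) :=
    (blockSwap_injOn m).mono fun q hq => by
      simp only [blockSwapParams, Finset.mem_coe, Finset.mem_filter, Finset.mem_product,
        Finset.mem_range, mem_ofPred_eq] at hq ⊢
      omega
  rw [hset, ncard_coe_finset, Finset.card_image_of_injOn hinj, card_blockSwapParams hm1]

/-- For `1 ≤ k ≤ m ≤ 2k−1`, the number of Grassmannian involutions of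
`{1,…,m}` that avoid `id_k` equals `⌊(2k−m)²/4⌋`. -/
theorem count_grassmannian_involutions_avoiding_identity (k m : ℕ) (hk : 1 ≤ k)
    (hm1 : k ≤ m) (hm2 : m ≤ 2 * k - 1) :
    {σ : Equiv.Perm (Fin m) |
        IsGrassmannian σ ∧ σ * σ = 1 ∧ AvoidsIdPat k σ}.ncard =
      (2 * k - m) ^ 2 / 4 :=
  count_grassmannian_involutions_avoiding_identity_general k m hm1
end
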